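/- arXiv:1804.06500 — 4 statements merged into one kernel-verified Lean document; each statement's English description precedes it below -/
import Mathlib

section
/- Let R > 0, p ∈ [1,∞], Λ := {λ ∈ ℝ₊^m : ‖λ‖_p ≤ R}, and suppose μ (on Θ) and ν (on Λ) satisfy sup_{λ* ∈ Λ} E_{θ∼μ}[ℒ(θ,λ*)] − inf_{θ* ∈ Θ} E_{λ∼ν}[ℒ(θ*,λ)] ≤ ε. Suppose there exists θ' ∈ Θ satisfying all constraints with margin γ > 0, i.e. g_i(θ') ≤ −γ for all i ∈ {1,…,m}, and let B_{g₀} ≥ sup_{θ∈Θ} g₀(θ) − inf_{θ∈Θ} g₀(θ) be a bound on the range of g₀ (assumed finite). Then λ̄ := E_{λ∼ν}[λ] satisfies ‖λ̄‖_p ≤ (ε + B_{g₀})/γ. -/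
/-!
Play the multiplier `λ = 0` against the strictly feasible `θ'` in the approximate equilibrium:
`E_μ g₀ - g₀ θ' - ∑ᵢ λ̄ᵢ gᵢ θ' ≤ ε`. Since `λ̄ ≥ 0` and `gᵢ θ' ≤ -γ`, the left side is at least
`-B + γ ‖λ̄‖₁`, and `‖λ̄‖_p ≤ ‖λ̄‖₁`.
-/

open MeasureTheory

/-- The `p`-norm of a vector in `Fin m → ℝ`, for `p ∈ [1,∞]` (an extended
nonnegative real). -/
noncomputable def pNorm {m : ℕ} (p : ENNReal) (x : Fin m → ℝ) : ℝ :=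
  if p = ⊤ then ⨆ i, |x i| else (∑ i, |x i| ^ p.toReal) ^ (1 / p.toReal)

theorem pNorm_eq_norm_toLp {m : ℕ} {p : ENNReal} (hp : p ≠ 0) (x : Fin m → ℝ) :
    pNorm p x = ‖WithLp.toLp p x‖ := by
  unfold pNorm
  split_ifs with htop
  · subst htop
    simp [PiLp.norm_eq_ciSup]
  · rw [PiLp.norm_eq_sum (ENNReal.toReal_pos hp htop)]
    simp

theorem pNorm_zero {m : ℕ} {p : ENNReal} (hp : 1 ≤ p) : pNorm p (0 : Fin m → ℝ) = 0 := by
  have : Fact (1 ≤ p) := ⟨hp⟩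
  rw [pNorm_eq_norm_toLp (zero_lt_one.trans_le hp).ne', WithLp.toLp_zero, norm_zero]

theorem pNorm_le_sum_abs {m : ℕ} {p : ENNReal} (hp : 1 ≤ p) (x : Fin m → ℝ) :
    pNorm p x ≤ ∑ i, |x i| := by
  have : Fact (1 ≤ p) := ⟨hp⟩
  classical
  calc pNorm p x = ‖∑ i, WithLp.toLp p (Pi.single i (x i) : Fin m → ℝ)‖ := by
        rw [← WithLp.toLp_sum, Finset.univ_sum_single]
        exact pNorm_eq_norm_toLp (zero_lt_one.trans_le hp).ne' x
    _ ≤ ∑ i, ‖WithLp.toLp p (Pi.single i (x i) : Fin m → ℝ)‖ := norm_sum_le _ _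
    _ = ∑ i, |x i| := by simp

theorem integral_nonneg_pi {Ω ι : Type*} [MeasurableSpace Ω] [Fintype ι] {ν : Measure Ω}
    {f : Ω → ι → ℝ} (hf : Integrable f ν) (h : ∀ᵐ ω ∂ν, 0 ≤ f ω) : 0 ≤ ∫ ω, f ω ∂ν := by
  intro i
  rw [Pi.zero_apply, eval_integral hf.eval]
  exact integral_nonneg_of_ae (h.mono fun ω hω => hω i)

theorem integral_const_add_sum_mul {ι : Type*} [Fintype ι] {ν : Measure (ι → ℝ)}
    [IsProbabilityMeasure ν] (hν : Integrable (fun l => l) ν) (c : ℝ) (a : ι → ℝ) :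
    ∫ l, (c + ∑ i, l i * a i) ∂ν = c + ∑ i, (∫ l, l ∂ν) i * a i := by
  have hmul : ∀ i, Integrable (fun l : ι → ℝ => l i * a i) ν := fun i => (hν.eval i).mul_const _
  rw [integral_add (integrable_const c) (integrable_finsetSum _ fun i _ => hmul i),
    integral_finsetSum _ fun i _ => hmul i, integral_const, probReal_univ, one_smul]
  simp_rw [integral_mul_const, eval_integral hν.eval]

theorem lagrangian_multiplier_bound_general
    {Θ : Type*} [MeasurableSpace Θ] {m : ℕ}
    (p : ENNReal) (hp : 1 ≤ p)
    (R ε γ B : ℝ) (hR : 0 < R) (hγ : 0 < γ)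
    (g0 : Θ → ℝ) (g : Fin m → Θ → ℝ)
    (L : Θ → (Fin m → ℝ) → ℝ)
    (hL : ∀ θ l, L θ l = g0 θ + ∑ i, l i * g i θ)
    (Λ : Set (Fin m → ℝ))
    (hΛ : Λ = {l | (∀ i, 0 ≤ l i) ∧ pNorm p l ≤ R})
    (μ : Measure Θ) [IsProbabilityMeasure μ]
    (ν : Measure (Fin m → ℝ)) [IsProbabilityMeasure ν]
    (hν : ∀ᵐ l ∂ν, l ∈ Λ)
    (hg0int : Integrable g0 μ)
    (hlint : Integrable (fun l => l) ν)
    -- `(μ, ν)` is an `ε`-approximate mixed Nash equilibrium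
    (hNash : ∀ l ∈ Λ, ∀ θ' : Θ, (∫ θ, L θ l ∂μ) - (∫ l', L θ' l' ∂ν) ≤ ε)
    -- a point satisfying all constraints with margin `γ`
    (θ' : Θ) (hθ' : ∀ i, g i θ' ≤ -γ)
    -- `B` bounds the range of the objective
    (hB : ∀ a b : Θ, g0 a - g0 b ≤ B) :
    pNorm p (∫ l, l ∂ν) ≤ (ε + B) / γ := by
  set lbar := ∫ l, l ∂ν
  subst hΛ
  have hlbar : 0 ≤ lbar := integral_nonneg_pi hlint (hν.mono fun l hl => hl.1)
  have hNash0 : ∫ θ, g0 θ ∂μ - (g0 θ' + ∑ i, lbar i * g i θ') ≤ ε := by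
    have := hNash 0 ⟨fun _ => le_rfl, (pNorm_zero hp).trans_le hR.le⟩ θ'
    simpa only [hL, Pi.zero_apply, zero_mul, Finset.sum_const_zero, add_zero,
      integral_const_add_sum_mul hlint] using this
  have hg0 : g0 θ' - B ≤ ∫ θ, g0 θ ∂μ := by
    simpa using integral_mono (integrable_const (g0 θ' - B)) hg0int fun θ => by
      linarith [hB θ' θ]
  have hslack : γ * ∑ i, lbar i ≤ -∑ i, lbar i * g i θ' := by
    rw [Finset.mul_sum, ← Finset.sum_neg_distrib]
    refine Finset.sum_le_sum fun i _ => ?_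
    linarith [mul_le_mul_of_nonneg_left (hθ' i) (hlbar i)]
  calc pNorm p lbar ≤ ∑ i, |lbar i| := pNorm_le_sum_abs hp lbar
    _ = ∑ i, lbar i := Finset.sum_congr rfl fun i _ => abs_of_nonneg (hlbar i)
    _ ≤ (ε + B) / γ := by rw [le_div_iff₀ hγ]; linarith

/-- **Bound on the mean Lagrange multipliers** (Lemma B.2).  In the setting of
the Lagrangian suboptimality theorem, if some `θ'` satisfies every constraint
with margin `γ > 0`, and `B ≥ sup g₀ − inf g₀`, then
`‖λ̄‖_p ≤ (ε + B) / γ` where `λ̄ := E_{λ∼ν}[λ]`. -/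
theorem lagrangian_multiplier_bound
    {Θ : Type*} [MeasurableSpace Θ] {m : ℕ}
    (p : ENNReal) (hp : 1 ≤ p)
    (R ε γ B : ℝ) (hR : 0 < R) (hγ : 0 < γ)
    (g0 : Θ → ℝ) (g : Fin m → Θ → ℝ)
    (L : Θ → (Fin m → ℝ) → ℝ)
    (hL : ∀ θ l, L θ l = g0 θ + ∑ i, l i * g i θ)
    (Λ : Set (Fin m → ℝ))
    (hΛ : Λ = {l | (∀ i, 0 ≤ l i) ∧ pNorm p l ≤ R})
    (μ : Measure Θ) [IsProbabilityMeasure μ]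
    (ν : Measure (Fin m → ℝ)) [IsProbabilityMeasure ν]
    (hν : ∀ᵐ l ∂ν, l ∈ Λ)
    (hg0int : Integrable g0 μ) (hgint : ∀ i, Integrable (g i) μ)
    (hLν : ∀ θ' : Θ, Integrable (fun l => L θ' l) ν)
    (hlint : Integrable (fun l => l) ν)
    -- `(μ, ν)` is an `ε`-approximate mixed Nash equilibrium
    (hNash : ∀ l ∈ Λ, ∀ θ' : Θ, (∫ θ, L θ l ∂μ) - (∫ l', L θ' l' ∂ν) ≤ ε)
    -- a point satisfying all constraints with margin `γ`
    (θ' : Θ) (hθ' : ∀ i, g i θ' ≤ -γ)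
    -- `B` bounds the range of the objective
    (hB : ∀ a b : Θ, g0 a - g0 b ≤ B) :
    pNorm p (∫ l, l ∂ν) ≤ (ε + B) / γ :=
  lagrangian_multiplier_bound_general p hp R ε γ B hR hγ g0 g L hL Λ hΛ μ ν hν hg0int hlint hNash θ'
    hθ' hB
end

section
/- (Projected subgradient descent.) Let Θ ⊆ ℝ^n be compact convex and f₁,…,f_T : Θ → ℝ convex. Let B_Θ ≥ max_{θ∈Θ} ‖θ‖₂ and suppose ǧ_t ∈ ∂f_t(θ^(t)) with ‖ǧ_t‖₂ ≤ B_ǧ for all t. Starting from θ^(1) = argmin_{θ∈Θ} ‖θ‖₂ and using step size η := B_Θ/(B_ǧ √(2T)), perform T iterations of θ^(t+1) = Π_Θ(θ^(t) − η ǧ_t), where Π_Θ is the Euclidean projection onto Θ. Then for every θ* ∈ Θ: (1/T) Σ_{t=1}^T f_t(θ^(t)) − (1/T) Σ_{t=1}^T f_t(θ*) ≤ B_Θ B_ǧ √(2/T). -/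
/-!
Projection onto a convex set moves a point closer to every point of the set, so one step
`θ⁺ = Π_Θ(θ - η g)` gives `‖θ⁺ - θ*‖² ≤ ‖θ - θ*‖² - 2η⟪g, θ - θ*⟫ + η²‖g‖²`. Summing over the
iterates telescopes to `∑ₜ ⟪gₜ, θₜ - θ*⟫ ≤ ‖θ₁ - θ*‖² / (2η) + η T B_g² / 2`, and
`‖θ₁ - θ*‖ ≤ ‖θ*‖ ≤ B_Θ` because `θ₁` is the projection of `0`. For the given `η` the right-hand
side equals `(3/4) B_Θ B_g √(2T)`, and the subgradient inequality bounds
`fₜ(θₜ) - fₜ(θ*)` by `⟪gₜ, θₜ - θ*⟫`.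
-/

noncomputable def euclNorm {k : ℕ} (x : Fin k → ℝ) : ℝ := Real.sqrt (∑ i, x i ^ 2)

open Finset RealInnerProductSpace

section ProjectedSubgradient

variable {E : Type*} [NormedAddCommGroup E] [InnerProductSpace ℝ E] {K : Set E}

def IsProjection (K : Set E) (z v : E) : Prop :=
  v ∈ K ∧ IsMinOn (fun y => ‖y - z‖) K v

theorem IsProjection.norm_sub_le (hK : Convex ℝ K) {z v w : E} (h : IsProjection K z v)
    (hw : w ∈ K) : ‖v - w‖ ≤ ‖z - w‖ := by
  have hiInf : ‖z - v‖ = ⨅ y : K, ‖z - y‖ := by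
    simp_rw [norm_sub_rev z]
    exact (h.2.iInf_eq h.1).symm
  have hobtuse : ⟪z - v, w - v⟫ ≤ 0 :=
    (norm_eq_iInf_iff_real_inner_le_zero hK h.1).1 hiInf w hw
  have hexpand : ‖z - w‖ ^ 2 = ‖z - v‖ ^ 2 - 2 * ⟪z - v, w - v⟫ + ‖w - v‖ ^ 2 := by
    rw [← norm_sub_sq_real, sub_sub_sub_cancel_right]
  rw [norm_sub_rev v w, ← sq_le_sq₀ (norm_nonneg _) (norm_nonneg _)]
  nlinarith [sq_nonneg ‖z - v‖]

theorem IsProjection.sq_norm_sub_le (hK : Convex ℝ K) {x g x' θ : E} {η : ℝ}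
    (h : IsProjection K (x - η • g) x') (hθ : θ ∈ K) :
    ‖x' - θ‖ ^ 2 ≤ ‖x - θ‖ ^ 2 - 2 * η * ⟪g, x - θ⟫ + η ^ 2 * ‖g‖ ^ 2 := by
  have hle := h.norm_sub_le hK hθ
  calc ‖x' - θ‖ ^ 2 ≤ ‖x - η • g - θ‖ ^ 2 := by gcongr
    _ = ‖(x - θ) - η • g‖ ^ 2 := by rw [sub_right_comm]
    _ = ‖x - θ‖ ^ 2 - 2 * η * ⟪g, x - θ⟫ + η ^ 2 * ‖g‖ ^ 2 := by
      rw [norm_sub_sq_real, real_inner_smul_right, norm_smul, mul_pow, Real.norm_eq_abs, sq_abs,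
        real_inner_comm]
      ring

variable {x g : ℕ → E} {η : ℝ} {θ : E} {T : ℕ}

theorem two_mul_sum_inner_add_sq_norm_le_of_isProjection (hK : Convex ℝ K) (hθ : θ ∈ K)
    (hproj : ∀ t < T, IsProjection K (x t - η • g t) (x (t + 1))) :
    2 * η * ∑ t ∈ range T, ⟪g t, x t - θ⟫ + ‖x T - θ‖ ^ 2
      ≤ ‖x 0 - θ‖ ^ 2 + η ^ 2 * ∑ t ∈ range T, ‖g t‖ ^ 2 := by
  induction T with
  | zero => simp
  | succ T ih =>
    have hstep := (hproj T T.lt_add_one).sq_norm_sub_le hK hθ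
    have hprev := ih fun t ht => hproj t (ht.trans T.lt_add_one)
    rw [sum_range_succ, sum_range_succ, mul_add, mul_add]
    linarith

theorem sum_inner_le_of_isProjection {D G : ℝ} (hK : Convex ℝ K) (hθ : θ ∈ K) (hη : 0 < η)
    (hD : ‖x 0 - θ‖ ≤ D) (hg : ∀ t < T, ‖g t‖ ≤ G)
    (hproj : ∀ t < T, IsProjection K (x t - η • g t) (x (t + 1))) :
    ∑ t ∈ range T, ⟪g t, x t - θ⟫ ≤ D ^ 2 / (2 * η) + η * T * G ^ 2 / 2 := by
  have htelescope := two_mul_sum_inner_add_sq_norm_le_of_isProjection hK hθ hproj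
  have hD2 : ‖x 0 - θ‖ ^ 2 ≤ D ^ 2 := pow_le_pow_left₀ (norm_nonneg _) hD 2
  have hG2 : ∑ t ∈ range T, ‖g t‖ ^ 2 ≤ T * G ^ 2 := by
    simpa using sum_le_card_nsmul (range T) _ _ fun t ht =>
      pow_le_pow_left₀ (norm_nonneg _) (hg t (mem_range.1 ht)) 2
  rw [div_add_div _ _ (by positivity) two_ne_zero, le_div_iff₀ (by positivity)]
  nlinarith [sq_nonneg ‖x T - θ‖, mul_le_mul_of_nonneg_left hG2 (sq_nonneg η)]

theorem sum_inner_le_mul_sqrt_of_isProjection {B G : ℝ} (hK : Convex ℝ K)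
    (hB : ∀ y ∈ K, ‖y‖ ≤ B) (hT : 0 < T) (hη : η = B / (G * √(2 * T)))
    (hinit : IsProjection K 0 (x 0)) (hg : ∀ t < T, ‖g t‖ ≤ G)
    (hproj : ∀ t < T, IsProjection K (x t - η • g t) (x (t + 1))) (hθ : θ ∈ K) :
    ∑ t ∈ range T, ⟪g t, x t - θ⟫ ≤ B * G * √(2 * T) := by
  have hB0 : 0 ≤ B := (norm_nonneg _).trans (hB _ hinit.1)
  have hG0 : 0 ≤ G := (norm_nonneg _).trans (hg 0 hT)
  have hs0 : 0 < √(2 * T) := Real.sqrt_pos.2 (by positivity)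
  rcases (mul_nonneg hB0 hG0).eq_or_lt with hBG | hBG
  · -- here `η = 0`, and Cauchy–Schwarz alone bounds every term by `2 B G = 0`
    have hmem : ∀ t < T, x t ∈ K
      | 0, _ => hinit.1
      | t + 1, ht => (hproj t (by omega)).1
    rw [← hBG, zero_mul]
    refine sum_nonpos fun t ht => ?_
    have ht := mem_range.1 ht
    calc ⟪g t, x t - θ⟫ ≤ ‖g t‖ * ‖x t - θ‖ := real_inner_le_norm _ _
      _ ≤ G * (B + B) := by
        gcongr
        · exact hg t ht
        · exact (norm_sub_le _ _).trans (add_le_add (hB _ (hmem t ht)) (hB _ hθ))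
      _ = 0 := by linarith
  · have hBpos : 0 < B := pos_of_mul_pos_left hBG hG0
    have hGpos : 0 < G := pos_of_mul_pos_right hBG hB0
    have hD : ‖x 0 - θ‖ ≤ B :=
      calc ‖x 0 - θ‖ ≤ ‖0 - θ‖ := hinit.norm_sub_le hK hθ
        _ ≤ B := by simpa using hB θ hθ
    have hηpos : 0 < η := hη ▸ by positivity
    have hs : √(2 * T) ^ 2 = 2 * T := Real.sq_sqrt (by positivity)
    have hbound : B ^ 2 / (2 * η) + η * T * G ^ 2 / 2 = 3 / 4 * (B * G * √(2 * T)) := by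
      rw [hη]
      field_simp
      nlinarith [hs]
    linarith [sum_inner_le_of_isProjection hK hθ hηpos hD hg hproj, mul_pos hBG hs0]

end ProjectedSubgradient

theorem euclNorm_eq_norm_toLp {k : ℕ} (x : Fin k → ℝ) : euclNorm x = ‖WithLp.toLp 2 x‖ := by
  simp [euclNorm, EuclideanSpace.norm_eq]

theorem inner_toLp_toLp_eq_sum {k : ℕ} (x y : Fin k → ℝ) :
    ⟪WithLp.toLp 2 x, WithLp.toLp 2 y⟫ = ∑ i, x i * y i := by
  simp [EuclideanSpace.inner_toLp_toLp, dotProduct, mul_comm]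

theorem isProjection_toLp {k : ℕ} {Θ : Set (Fin k → ℝ)} {z v : Fin k → ℝ} (hv : v ∈ Θ)
    (hmin : ∀ y ∈ Θ, euclNorm (v - z) ≤ euclNorm (y - z)) :
    IsProjection (WithLp.ofLp ⁻¹' Θ) (WithLp.toLp 2 z) (WithLp.toLp 2 v) :=
  ⟨hv, fun y hy => by simpa [euclNorm_eq_norm_toLp] using hmin _ hy⟩

theorem projected_subgradient_descent_general
    {n : ℕ} (Θ : Set (Fin n → ℝ)) (hΘconv : Convex ℝ Θ)
    (f : ℕ → (Fin n → ℝ) → ℝ)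
    (BΘ Bg : ℝ) (hBΘ : ∀ θ ∈ Θ, euclNorm θ ≤ BΘ)
    (T : ℕ) (hT : 0 < T)
    (η : ℝ) (hη : η = BΘ / (Bg * Real.sqrt (2 * T)))
    (θs : ℕ → Fin n → ℝ) (gs : ℕ → Fin n → ℝ)
    -- `θ^(1)` is the minimum-norm point of `Θ`
    (hinit : θs 0 ∈ Θ ∧ ∀ y ∈ Θ, euclNorm (θs 0) ≤ euclNorm y)
    -- `ǧ_t` is a subgradient of `f_t` at `θ^(t)`
    (hsubgrad : ∀ t < T, ∀ y ∈ Θ, f t (θs t) + ∑ i, gs t i * (y i - θs t i) ≤ f t y)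
    (hgb : ∀ t < T, euclNorm (gs t) ≤ Bg)
    -- `θ^(t+1)` is the Euclidean projection of `θ^(t) − η ǧ_t` onto `Θ`
    (hproj : ∀ t < T, θs (t + 1) ∈ Θ ∧
      ∀ y ∈ Θ, euclNorm (θs (t + 1) - (θs t - η • gs t))
        ≤ euclNorm (y - (θs t - η • gs t))) :
    ∀ θ' ∈ Θ,
      (1 / (T : ℝ)) * ∑ t ∈ Finset.range T, f t (θs t)
        - (1 / (T : ℝ)) * ∑ t ∈ Finset.range T, f t θ'
      ≤ BΘ * Bg * Real.sqrt (2 / T) := by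
  intro θ' hθ'
  have hregret := sum_inner_le_mul_sqrt_of_isProjection (K := WithLp.ofLp ⁻¹' Θ)
    (x := fun t => WithLp.toLp 2 (θs t)) (g := fun t => WithLp.toLp 2 (gs t))
    (θ := WithLp.toLp 2 θ')
    (hΘconv.linear_preimage (WithLp.linearEquiv 2 ℝ (Fin n → ℝ)).toLinearMap)
    (fun y hy => by simpa [euclNorm_eq_norm_toLp] using hBΘ _ hy) hT hη
    (by simpa using isProjection_toLp (z := 0) hinit.1 (by simpa using hinit.2))
    (fun t ht => by simpa [euclNorm_eq_norm_toLp] using hgb t ht)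
    (fun t ht => by simpa using isProjection_toLp (hproj t ht).1 (hproj t ht).2) hθ'
  have hlin : ∀ t < T, f t (θs t) - f t θ'
      ≤ ⟪WithLp.toLp 2 (gs t), WithLp.toLp 2 (θs t) - WithLp.toLp 2 θ'⟫ := fun t ht => by
    have := hsubgrad t ht θ' hθ'
    rw [← WithLp.toLp_sub, inner_toLp_toLp_eq_sum]
    simp only [Pi.sub_apply, mul_sub, sum_sub_distrib] at this ⊢
    linarith
  have hT' : (0 : ℝ) < T := by exact_mod_cast hT
  calc (1 / (T : ℝ)) * ∑ t ∈ range T, f t (θs t) - (1 / (T : ℝ)) * ∑ t ∈ range T, f t θ'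
      = (1 / (T : ℝ)) * ∑ t ∈ range T, (f t (θs t) - f t θ') := by rw [sum_sub_distrib, mul_sub]
    _ ≤ (1 / (T : ℝ)) * (BΘ * Bg * √(2 * T)) := by
      gcongr
      exact (sum_le_sum fun t ht => hlin t (mem_range.1 ht)).trans hregret
    _ = BΘ * Bg * √(2 / T) := by
      rw [Real.sqrt_div' _ hT'.le, Real.sqrt_mul' _ hT'.le]
      field_simp
      rw [Real.sq_sqrt hT'.le]
      ring

/-- **Projected subgradient descent** (Corollary C.7).  Let `Θ` be compact
convex with `‖θ‖₂ ≤ B_Θ` on `Θ`, and `f₁, …, f_T` convex on `Θ` with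
subgradients bounded by `B_ǧ` in Euclidean norm.  Starting from the
minimum-norm point of `Θ` and using step size `η = B_Θ / (B_ǧ √(2T))`, the
projected subgradient iterates satisfy, for every `θ* ∈ Θ`,
`(1/T) ∑ₜ fₜ(θ^(t)) − (1/T) ∑ₜ fₜ(θ*) ≤ B_Θ B_ǧ √(2/T)`. -/
theorem projected_subgradient_descent
    {n : ℕ} (Θ : Set (Fin n → ℝ)) (hΘcomp : IsCompact Θ) (hΘconv : Convex ℝ Θ)
    (f : ℕ → (Fin n → ℝ) → ℝ) (hf : ∀ t, ConvexOn ℝ Θ (f t))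
    (BΘ Bg : ℝ) (hBΘ : ∀ θ ∈ Θ, euclNorm θ ≤ BΘ)
    (T : ℕ) (hT : 0 < T)
    (η : ℝ) (hη : η = BΘ / (Bg * Real.sqrt (2 * T)))
    (θs : ℕ → Fin n → ℝ) (gs : ℕ → Fin n → ℝ)
    -- `θ^(1)` is the minimum-norm point of `Θ`
    (hinit : θs 0 ∈ Θ ∧ ∀ y ∈ Θ, euclNorm (θs 0) ≤ euclNorm y)
    -- `ǧ_t` is a subgradient of `f_t` at `θ^(t)`
    (hsubgrad : ∀ t < T, ∀ y ∈ Θ, f t (θs t) + ∑ i, gs t i * (y i - θs t i) ≤ f t y)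
    (hgb : ∀ t < T, euclNorm (gs t) ≤ Bg)
    -- `θ^(t+1)` is the Euclidean projection of `θ^(t) − η ǧ_t` onto `Θ`
    (hproj : ∀ t < T, θs (t + 1) ∈ Θ ∧
      ∀ y ∈ Θ, euclNorm (θs (t + 1) - (θs t - η • gs t))
        ≤ euclNorm (y - (θs t - η • gs t))) :
    ∀ θ' ∈ Θ,
      (1 / (T : ℝ)) * ∑ t ∈ Finset.range T, f t (θs t)
        - (1 / (T : ℝ)) * ∑ t ∈ Finset.range T, f t θ'
      ≤ BΘ * Bg * Real.sqrt (2 / T) :=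
  projected_subgradient_descent_general Θ hΘconv f BΘ Bg hBΘ T hT η hη θs gs hinit hsubgrad hgb
    hproj
end

section
/- (Swap-regret bound.) Let Λ := Δ^{m̃} be the m̃-dimensional probability simplex, ℳ the set of left-stochastic m̃×m̃ matrices, and f₁,…,f_T : Λ → ℝ concave. Starting from M^(1) with all entries 1/m̃ and with step size η := √(m̃ ln m̃/(T B_ĝ²)), perform T iterations: λ^(t) := a stationary distribution of M^(t) (so M^(t) λ^(t) = λ^(t)); A^(t) := ĝ_t (λ^(t))ᵀ, where ĝ_t is a supergradient of f_t at λ^(t) with ‖ĝ_t‖_∞ ≤ B_ĝ; M̃^(t+1) = M^(t) ⊙ exp(η A^(t)) element-wise; and M^(t+1) is M̃^(t+1) with each column normalized to sum to 1. Then for every M* ∈ ℳ: (1/T) Σ_{t=1}^T f_t(M* λ^(t)) − (1/T) Σ_{t=1}^T f_t(λ^(t)) ≤ 2 B_ĝ √(m̃ ln m̃ / T). -/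
/-!
Linearizing each `fₜ` at `λ^(t)` by its supergradient and using `M^(t) λ^(t) = λ^(t)` turns
the per-round swap regret into `⟨M* − M^(t), ĝₜ (λ^(t))ᵀ⟩ = ∑ⱼ ⟨M*_{·j} − M^(t)_{·j}, λ^(t)ⱼ ĝₜ⟩`.
The update rule runs an independent Hedge (exponential weights) learner in every column `j`,
fed with the gains `λ^(t)ⱼ ĝₜ`, so column `j` contributes at most
`ln m̃ / η + η B_ĝ² ∑ₜ (λ^(t)ⱼ)²`. Summing over columns and using `∑ⱼ (λ^(t)ⱼ)² ≤ 1` gives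
`m̃ ln m̃ / η + η B_ĝ² T`, which the choice of `η` balances to `2 B_ĝ √(m̃ ln m̃ T)`.
When `η B_ĝ > 1` the claimed bound already exceeds the trivial one `2 B_ĝ`.
-/

open Finset Real

section Hedge

variable {ι : Type*} [Fintype ι]

noncomputable def hedgeUpdate (w x : ι → ℝ) : ι → ℝ :=
  fun i => w i * exp (x i) / ∑ k, w k * exp (x k)

lemma sum_mul_exp_pos {w : ι → ℝ} (hw : w ∈ stdSimplex ℝ ι) (x : ι → ℝ) :
    0 < ∑ k, w k * exp (x k) := by
  obtain ⟨i, -, hi⟩ : ∃ i ∈ univ, (0 : ι → ℝ) i < w i :=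
    exists_lt_of_sum_lt (by simp [hw.2])
  exact sum_pos' (fun k _ => mul_nonneg (hw.1 k) (exp_pos _).le)
    ⟨i, mem_univ i, mul_pos hi (exp_pos _)⟩

lemma hedgeUpdate_mem_stdSimplex {w : ι → ℝ} (hw : w ∈ stdSimplex ℝ ι) (x : ι → ℝ) :
    hedgeUpdate w x ∈ stdSimplex ℝ ι := by
  refine ⟨fun i => div_nonneg (mul_nonneg (hw.1 i) (exp_pos _).le) (sum_mul_exp_pos hw x).le, ?_⟩
  simp only [hedgeUpdate]
  rw [← sum_div, div_self (sum_mul_exp_pos hw x).ne']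

lemma hedgeUpdate_pos {w : ι → ℝ} (hw : w ∈ stdSimplex ℝ ι) (x : ι → ℝ) {i : ι}
    (hi : 0 < w i) : 0 < hedgeUpdate w x i :=
  div_pos (mul_pos hi (exp_pos _)) (sum_mul_exp_pos hw x)

lemma log_hedgeUpdate {w : ι → ℝ} (hw : w ∈ stdSimplex ℝ ι) (x : ι → ℝ) {i : ι}
    (hi : 0 < w i) :
    log (hedgeUpdate w x i) = log (w i) + x i - log (∑ k, w k * exp (x k)) := by
  rw [hedgeUpdate, log_div (mul_pos hi (exp_pos _)).ne' (sum_mul_exp_pos hw x).ne',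
    log_mul hi.ne' (exp_pos _).ne', log_exp]

lemma exp_le_one_add_add_sq {x : ℝ} (hx : |x| ≤ 1) : exp x ≤ 1 + x + x ^ 2 := by
  linarith [(abs_le.mp (abs_exp_sub_one_sub_id_le hx)).2]

lemma log_sum_mul_exp_le {w x : ι → ℝ} {c : ℝ} (hw : w ∈ stdSimplex ℝ ι)
    (hx : ∀ i, |x i| ≤ c) (hc : c ≤ 1) :
    log (∑ i, w i * exp (x i)) ≤ ∑ i, w i * x i + c ^ 2 := by
  have hZ : ∑ i, w i * exp (x i) ≤ ∑ i, w i * (1 + x i + c ^ 2) := by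
    refine sum_le_sum fun i _ => mul_le_mul_of_nonneg_left ?_ (hw.1 i)
    have hsq : x i ^ 2 ≤ c ^ 2 := by
      rw [← sq_abs]; exact pow_le_pow_left₀ (abs_nonneg _) (hx i) 2
    linarith [exp_le_one_add_add_sq ((hx i).trans hc)]
  have hsum : ∑ i, w i * (1 + x i + c ^ 2) = 1 + (∑ i, w i * x i + c ^ 2) := by
    simp only [mul_add, mul_one, sum_add_distrib, ← sum_mul, hw.2]; ring
  linarith [log_le_sub_one_of_pos (sum_mul_exp_pos hw x)]

variable {w x : ℕ → ι → ℝ} {T : ℕ}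

lemma hedge_mem_stdSimplex_and_pos (h0 : w 0 ∈ stdSimplex ℝ ι) (h0pos : ∀ i, 0 < w 0 i)
    (hw : ∀ t < T, w (t + 1) = hedgeUpdate (w t) (x t)) :
    ∀ t ≤ T, w t ∈ stdSimplex ℝ ι ∧ ∀ i, 0 < w t i := by
  intro t ht
  induction t with
  | zero => exact ⟨h0, h0pos⟩
  | succ t ih =>
    obtain ⟨hwt, hpos⟩ := ih (by omega)
    rw [hw t (by omega)]
    exact ⟨hedgeUpdate_mem_stdSimplex hwt _, fun i => hedgeUpdate_pos hwt _ (hpos i)⟩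

theorem hedge_gain_le [Nonempty ι] (hw0 : ∀ i, w 0 i = 1 / Fintype.card ι)
    (hw : ∀ t < T, w (t + 1) = hedgeUpdate (w t) (x t)) {c : ℕ → ℝ}
    (hx : ∀ t < T, ∀ i, |x t i| ≤ c t) (hc : ∀ t < T, c t ≤ 1) (i : ι) :
    ∑ t ∈ range T, x t i
      ≤ log (Fintype.card ι) + ∑ t ∈ range T, (∑ k, w t k * x t k + c t ^ 2) := by
  have hn : (0 : ℝ) < Fintype.card ι := by exact_mod_cast Fintype.card_pos
  have h0 : w 0 ∈ stdSimplex ℝ ι :=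
    ⟨fun i => by rw [hw0]; positivity, by simp [hw0, card_univ]⟩
  have hinv := hedge_mem_stdSimplex_and_pos h0 (fun i => by rw [hw0]; positivity) hw
  have hstep : ∀ t ∈ range T,
      x t i ≤ (log (w (t + 1) i) - log (w t i)) + (∑ k, w t k * x t k + c t ^ 2) := by
    intro t ht
    obtain ⟨hwt, hpos⟩ := hinv t (mem_range.mp ht).le
    rw [hw t (mem_range.mp ht), log_hedgeUpdate hwt _ (hpos i)]
    linarith [log_sum_mul_exp_le hwt (hx t (mem_range.mp ht)) (hc t (mem_range.mp ht))]
  have hlast : log (w T i) ≤ 0 :=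
    log_nonpos ((hinv T le_rfl).2 i).le (mem_Icc_of_mem_stdSimplex (hinv T le_rfl).1 i).2
  calc ∑ t ∈ range T, x t i
      ≤ ∑ t ∈ range T, ((log (w (t + 1) i) - log (w t i)) + (∑ k, w t k * x t k + c t ^ 2)) :=
        sum_le_sum hstep
    _ = log (w T i) - log (w 0 i) + ∑ t ∈ range T, (∑ k, w t k * x t k + c t ^ 2) := by
        rw [sum_add_distrib, sum_range_sub (fun t => log (w t i))]
    _ ≤ _ := by rw [hw0, one_div, log_inv]; linarith

theorem hedge_regret_le (hw0 : ∀ i, w 0 i = 1 / Fintype.card ι)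
    (hw : ∀ t < T, w (t + 1) = hedgeUpdate (w t) (x t)) {c : ℕ → ℝ}
    (hx : ∀ t < T, ∀ i, |x t i| ≤ c t) (hc : ∀ t < T, c t ≤ 1) {p : ι → ℝ}
    (hp : p ∈ stdSimplex ℝ ι) :
    ∑ t ∈ range T, ∑ i, (p i - w t i) * x t i
      ≤ log (Fintype.card ι) + ∑ t ∈ range T, c t ^ 2 := by
  have : Nonempty ι :=
    univ_nonempty_iff.mp (nonempty_of_sum_ne_zero (f := p) (by rw [hp.2]; exact one_ne_zero))
  have hmix := sum_le_sum fun i (_ : i ∈ univ) =>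
    mul_le_mul_of_nonneg_left (hedge_gain_le hw0 hw hx hc i) (hp.1 i)
  rw [← sum_mul, hp.2, one_mul, sum_add_distrib] at hmix
  calc ∑ t ∈ range T, ∑ i, (p i - w t i) * x t i
      = ∑ i, p i * ∑ t ∈ range T, x t i - ∑ t ∈ range T, ∑ k, w t k * x t k := by
        simp only [sub_mul, sum_sub_distrib, mul_sum]
        rw [sum_comm]
    _ ≤ _ := by linarith

end Hedge

section SwapRegret

variable {ι : Type*} [Fintype ι]

lemma sum_mul_mem_stdSimplex {κ : Type*} [Fintype κ] {M : ι → κ → ℝ} {v : κ → ℝ}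
    (hM : ∀ j, (fun i => M i j) ∈ stdSimplex ℝ ι) (hv : v ∈ stdSimplex ℝ κ) :
    (fun i => ∑ j, M i j * v j) ∈ stdSimplex ℝ ι := by
  refine ⟨fun i => sum_nonneg fun j _ => mul_nonneg ((hM j).1 i) (hv.1 j), ?_⟩
  have hcol : ∀ j, ∑ i, M i j = 1 := fun j => (hM j).2
  rw [sum_comm]
  simp only [← sum_mul, hcol, one_mul, hv.2]

lemma sum_sq_le_one_of_mem_stdSimplex {v : ι → ℝ} (hv : v ∈ stdSimplex ℝ ι) :
    ∑ i, v i ^ 2 ≤ 1 := by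
  calc ∑ i, v i ^ 2 ≤ ∑ i, v i := sum_le_sum fun i _ => by
        nlinarith [hv.1 i, (mem_Icc_of_mem_stdSimplex hv i).2]
    _ = 1 := hv.2

lemma abs_sum_mul_le_of_mem_stdSimplex {g y : ι → ℝ} {B : ℝ} (hg : ∀ i, |g i| ≤ B)
    (hy : y ∈ stdSimplex ℝ ι) : |∑ i, g i * y i| ≤ B :=
  calc |∑ i, g i * y i| ≤ ∑ i, |g i * y i| := abs_sum_le_sum_abs _ _
    _ ≤ ∑ i, B * y i := sum_le_sum fun i _ => by
        rw [abs_mul, abs_of_nonneg (hy.1 i)]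
        exact mul_le_mul_of_nonneg_right (hg i) (hy.1 i)
    _ = B := by rw [← mul_sum, hy.2, mul_one]

lemma sum_mul_sub_le_two_mul {g y v : ι → ℝ} {B : ℝ} (hg : ∀ i, |g i| ≤ B)
    (hy : y ∈ stdSimplex ℝ ι) (hv : v ∈ stdSimplex ℝ ι) :
    ∑ i, g i * (y i - v i) ≤ 2 * B := by
  have hgy := abs_le.mp (abs_sum_mul_le_of_mem_stdSimplex hg hy)
  have hgv := abs_le.mp (abs_sum_mul_le_of_mem_stdSimplex hg hv)
  simp only [mul_sub, sum_sub_distrib]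
  linarith

lemma sum_mul_sub_eq_of_stationary {M M' : ι → ι → ℝ} {g v : ι → ℝ}
    (hM : ∀ i, ∑ j, M i j * v j = v i) :
    ∑ i, g i * (∑ j, M' i j * v j - v i) = ∑ j, ∑ i, (M' i j - M i j) * (g i * v j) := by
  rw [sum_comm]
  refine sum_congr rfl fun i _ => ?_
  rw [← hM i, ← sum_sub_distrib, mul_sum]
  exact sum_congr rfl fun j _ => by ring

theorem column_hedge_swap_regret_le {T : ℕ} {η B : ℝ} (hη : 0 ≤ η) (hηB : η * B ≤ 1)
    {v g : ℕ → ι → ℝ} {M : ℕ → ι → ι → ℝ} (hM0 : ∀ i j, M 0 i j = 1 / Fintype.card ι)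
    (hv : ∀ t < T, v t ∈ stdSimplex ℝ ι) (hg : ∀ t < T, ∀ i, |g t i| ≤ B)
    (hM : ∀ t < T, ∀ i j, M (t + 1) i j =
      M t i j * exp (η * (g t i * v t j)) / ∑ k, M t k j * exp (η * (g t k * v t j)))
    {M' : ι → ι → ℝ} (hM' : ∀ j, (fun i => M' i j) ∈ stdSimplex ℝ ι) :
    η * ∑ t ∈ range T, ∑ j, ∑ i, (M' i j - M t i j) * (g t i * v t j)
      ≤ Fintype.card ι * log (Fintype.card ι) + η ^ 2 * B ^ 2 * T := by
  have hcol : ∀ j, ∑ t ∈ range T, ∑ i, (M' i j - M t i j) * (η * (g t i * v t j))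
      ≤ log (Fintype.card ι) + ∑ t ∈ range T, (η * B * v t j) ^ 2 := by
    intro j
    refine hedge_regret_le (w := fun t i => M t i j) (hM0 · j) (fun t ht => funext (hM t ht · j))
      (fun t ht i => ?_) (fun t ht => ?_) (hM' j)
    · rw [abs_mul, abs_of_nonneg hη, abs_mul, abs_of_nonneg ((hv t ht).1 j), ← mul_assoc]
      exact mul_le_mul_of_nonneg_right (mul_le_mul_of_nonneg_left (hg t ht i) hη) ((hv t ht).1 j)
    · have hB : 0 ≤ B := (abs_nonneg _).trans (hg t ht j)
      calc η * B * v t j ≤ η * B * 1 :=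
            mul_le_mul_of_nonneg_left (mem_Icc_of_mem_stdSimplex (hv t ht) j).2 (by positivity)
        _ ≤ 1 := by rw [mul_one]; exact hηB
  have hsq : ∑ t ∈ range T, ∑ j, v t j ^ 2 ≤ T := by
    calc ∑ t ∈ range T, ∑ j, v t j ^ 2 ≤ ∑ t ∈ range T, (1 : ℝ) :=
          sum_le_sum fun t ht => sum_sq_le_one_of_mem_stdSimplex (hv t (mem_range.mp ht))
      _ = T := by simp
  calc η * ∑ t ∈ range T, ∑ j, ∑ i, (M' i j - M t i j) * (g t i * v t j)
      = ∑ j, ∑ t ∈ range T, ∑ i, (M' i j - M t i j) * (η * (g t i * v t j)) := by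
        simp only [mul_sum, mul_left_comm η]
        rw [sum_comm]
    _ ≤ ∑ j, (log (Fintype.card ι) + ∑ t ∈ range T, (η * B * v t j) ^ 2) :=
        sum_le_sum fun j _ => hcol j
    _ = Fintype.card ι * log (Fintype.card ι) + η ^ 2 * B ^ 2 * ∑ t ∈ range T, ∑ j, v t j ^ 2 := by
        simp only [sum_add_distrib, sum_const, card_univ, nsmul_eq_mul, mul_pow, ← mul_sum]
        rw [sum_comm]
    _ ≤ _ := by gcongr

end SwapRegret

lemma div_le_two_mul_sqrt {S B L T η : ℝ} (hT : 0 < T) (hL : 0 < L) (hB : 0 ≤ B)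
    (hη : η = √(L / (T * B ^ 2))) (htriv : S ≤ 2 * B * T)
    (hhedge : η * B ≤ 1 → η * S ≤ L + η ^ 2 * B ^ 2 * T) :
    S / T ≤ 2 * B * √(L / T) := by
  set s := √(L / T)
  have hs : 0 < s := sqrt_pos.mpr (div_pos hL hT)
  have hS : S / T ≤ 2 * B := by rw [div_le_iff₀ hT]; exact htriv
  rcases hB.eq_or_lt with rfl | hB
  · simpa using hS
  -- at this step size the two terms `L / (η T)` and `η B²` of the bound are both `B s`
  have hηs : η * B = s := by
    rw [hη, ← div_div, sqrt_div' _ (sq_nonneg B), sqrt_sq hB.le, div_mul_cancel₀ _ hB.ne']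
  rcases le_or_gt 1 s with hs1 | hs1
  · exact hS.trans (le_mul_of_one_le_right (by positivity) hs1)
  have hηpos : 0 < η := (mul_pos_iff_of_pos_right hB).mp (hηs ▸ hs)
  have hs2 : s ^ 2 = L / T := sq_sqrt (div_pos hL hT).le
  have hL : L = s ^ 2 * T := by rw [hs2]; field_simp
  have hηS : η * S ≤ η * (2 * B * s * T) :=
    calc η * S ≤ L + η ^ 2 * B ^ 2 * T := hhedge (hηs ▸ hs1.le)
      _ = η * (2 * B * s * T) := by rw [hL, ← hηs]; ring
  rw [div_le_iff₀ hT]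
  exact le_of_mul_le_mul_left hηS hηpos

theorem swap_regret_bound_general
    {mt : ℕ} (T : ℕ) (Bg : ℝ)
    (f : ℕ → (Fin mt → ℝ) → ℝ)
    (η : ℝ) (hη : η = Real.sqrt ((mt : ℝ) * Real.log mt / (T * Bg ^ 2)))
    (lams : ℕ → Fin mt → ℝ)
    (gs : ℕ → Fin mt → ℝ)
    (Ms : ℕ → Fin mt → Fin mt → ℝ)
    (hinit : ∀ i j, Ms 0 i j = 1 / (mt : ℝ))
    -- `λ^(t)` is a stationary distribution of `M^(t)`
    (hstat : ∀ t < T, lams t ∈ stdSimplex ℝ (Fin mt) ∧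
      ∀ i, ∑ j, Ms t i j * lams t j = lams t i)
    -- `ĝ_t` is a supergradient of `f_t` at `λ^(t)`
    (hsuper : ∀ t < T, ∀ y ∈ stdSimplex ℝ (Fin mt),
      f t y ≤ f t (lams t) + ∑ i, gs t i * (y i - lams t i))
    -- `∞`-norm bound on the supergradients
    (hgb : ∀ t < T, ∀ i, |gs t i| ≤ Bg)
    -- multiplicative update with `A^(t) = ĝ_t (λ^(t))ᵀ`, then column
    -- normalization
    (hupdate : ∀ t < T, ∀ i j,
      Ms (t + 1) i j = (Ms t i j * Real.exp (η * (gs t i * lams t j)))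
        / ∑ k, Ms t k j * Real.exp (η * (gs t k * lams t j))) :
    ∀ M' : Fin mt → Fin mt → ℝ,
      (∀ j, (fun i => M' i j) ∈ stdSimplex ℝ (Fin mt)) →
      (1 / (T : ℝ)) * ∑ t ∈ Finset.range T, f t (fun i => ∑ j, M' i j * lams t j)
        - (1 / (T : ℝ)) * ∑ t ∈ Finset.range T, f t (lams t)
      ≤ 2 * Bg * Real.sqrt ((mt : ℝ) * Real.log mt / T) := by
  intro M' hM'
  rcases Nat.eq_zero_or_pos T with rfl | hT
  · simp
  have hmt : 0 < mt := Nat.pos_of_ne_zero (by rintro rfl; simpa using (hstat 0 hT).1.2)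
  have hBg : 0 ≤ Bg := (abs_nonneg _).trans (hgb 0 hT ⟨0, hmt⟩)
  have hy : ∀ t < T, (fun i => ∑ j, M' i j * lams t j) ∈ stdSimplex ℝ (Fin mt) :=
    fun t ht => sum_mul_mem_stdSimplex hM' (hstat t ht).1
  set D : ℕ → ℝ := fun t => ∑ i, gs t i * (∑ j, M' i j * lams t j - lams t i)
  calc _ = (∑ t ∈ range T, (f t (fun i => ∑ j, M' i j * lams t j) - f t (lams t))) / T := by
        rw [sum_sub_distrib]; ring
    _ ≤ (∑ t ∈ range T, D t) / T := by
        gcongr with t ht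
        linarith [hsuper t (mem_range.mp ht) _ (hy t (mem_range.mp ht))]
    _ ≤ _ := ?_
  obtain rfl | hmt2 : mt = 1 ∨ 2 ≤ mt := by omega
  · have hsub : (stdSimplex ℝ (Fin 1)).Subsingleton := by
      rw [stdSimplex_unique]; exact Set.subsingleton_singleton
    have hD : ∀ t ∈ range T, D t = 0 := fun t ht => by
      have hyt := hsub (hy t (mem_range.mp ht)) (hstat t (mem_range.mp ht)).1
      simp only [D, fun i => congrFun hyt i, sub_self, mul_zero, sum_const_zero]
    simp [sum_eq_zero hD]
  refine div_le_two_mul_sqrt (by positivity)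
    (mul_pos (by positivity) (log_pos (by exact_mod_cast hmt2))) hBg hη ?_ fun hηBg => ?_
  · calc ∑ t ∈ range T, D t ≤ ∑ t ∈ range T, 2 * Bg := sum_le_sum fun t ht =>
          sum_mul_sub_le_two_mul (hgb t (mem_range.mp ht)) (hy t (mem_range.mp ht))
            (hstat t (mem_range.mp ht)).1
      _ = 2 * Bg * T := by simp [mul_comm]
  · rw [sum_congr rfl fun t ht => sum_mul_sub_eq_of_stationary (hstat t (mem_range.mp ht)).2]
    simpa using column_hedge_swap_regret_le (hη ▸ sqrt_nonneg _) hηBg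
      (fun i j => by rw [hinit, Fintype.card_fin]) (fun t ht => (hstat t ht).1) hgb hupdate hM'

/-- **Swap-regret bound** (Lemma C.9).  Let `Λ = Δ^{m̃}` and `f₁, …, f_T` be
concave on `Λ` with supergradients bounded by `B_ĝ` in `∞`-norm.  At each step
the player plays a stationary distribution `λ^(t)` of the left-stochastic
matrix `M^(t)`, and updates `M` multiplicatively using the rank-one matrix
`A^(t) = ĝ_t (λ^(t))ᵀ`, followed by column normalization, with step size
`η = √(m̃ ln m̃ / (T B_ĝ²))`.  Then for every left-stochastic `M*`,
`(1/T) ∑ₜ fₜ(M* λ^(t)) − (1/T) ∑ₜ fₜ(λ^(t)) ≤ 2 B_ĝ √(m̃ ln m̃ / T)`. -/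
theorem swap_regret_bound
    {mt : ℕ} (T : ℕ) (hT : 0 < T) (Bg : ℝ)
    (f : ℕ → (Fin mt → ℝ) → ℝ)
    (hconc : ∀ t, ConcaveOn ℝ (stdSimplex ℝ (Fin mt)) (f t))
    (η : ℝ) (hη : η = Real.sqrt ((mt : ℝ) * Real.log mt / (T * Bg ^ 2)))
    (lams : ℕ → Fin mt → ℝ)
    (gs : ℕ → Fin mt → ℝ)
    (Ms : ℕ → Fin mt → Fin mt → ℝ)
    (hinit : ∀ i j, Ms 0 i j = 1 / (mt : ℝ))
    -- `λ^(t)` is a stationary distribution of `M^(t)`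
    (hstat : ∀ t < T, lams t ∈ stdSimplex ℝ (Fin mt) ∧
      ∀ i, ∑ j, Ms t i j * lams t j = lams t i)
    -- `ĝ_t` is a supergradient of `f_t` at `λ^(t)`
    (hsuper : ∀ t < T, ∀ y ∈ stdSimplex ℝ (Fin mt),
      f t y ≤ f t (lams t) + ∑ i, gs t i * (y i - lams t i))
    -- `∞`-norm bound on the supergradients
    (hgb : ∀ t < T, ∀ i, |gs t i| ≤ Bg)
    -- multiplicative update with `A^(t) = ĝ_t (λ^(t))ᵀ`, then column
    -- normalization
    (hupdate : ∀ t < T, ∀ i j,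
      Ms (t + 1) i j = (Ms t i j * Real.exp (η * (gs t i * lams t j)))
        / ∑ k, Ms t k j * Real.exp (η * (gs t k * lams t j))) :
    ∀ M' : Fin mt → Fin mt → ℝ,
      (∀ j, (fun i => M' i j) ∈ stdSimplex ℝ (Fin mt)) →
      (1 / (T : ℝ)) * ∑ t ∈ Finset.range T, f t (fun i => ∑ j, M' i j * lams t j)
        - (1 / (T : ℝ)) * ∑ t ∈ Finset.range T, f t (lams t)
      ≤ 2 * Bg * Real.sqrt ((mt : ℝ) * Real.log mt / T) :=
  swap_regret_bound_general T Bg f η hη lams gs Ms hinit hstat hsuper hgb hupdate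
end

section
/- (Stochastic mirror descent.) Let Θ ⊆ ℝ^n be compact convex, f₁,…,f_T : Θ → ℝ convex, ‖·‖ a norm with dual norm ‖·‖_*, and Ψ : Θ → ℝ₊ nonnegative, differentiable and 1-strongly convex w.r.t. ‖·‖ with B_Ψ ≥ max_{θ∈Θ} Ψ(θ). Starting from θ^(1) = argmin_{θ∈Θ} Ψ(θ), perform T stochastic mirror-descent iterations: ∇Ψ(θ̃^(t+1)) = ∇Ψ(θ^(t)) − η ǧ^(t) and θ^(t+1) = argmin_{θ∈Θ} B_Ψ(θ | θ̃^(t+1)), where ǧ^(t) is an adapted random vector with E[ǧ^(t) | θ^(t), past] ∈ ∂f_t(θ^(t)), ‖ǧ^(t)‖_* ≤ B_ǧ almost surely, and η := √(B_Ψ/(T B_ǧ²)). Then for every θ* ∈ Θ, with probability at least 1−δ over the draws of the stochastic subgradients: (1/T) Σ_{t=1}^T f_t(θ^(t)) − (1/T) Σ_{t=1}^T f_t(θ*) ≤ 2 B_ǧ √(2 B_Ψ (1 + 16 ln(1/δ)) / T). -/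
/-!
Write `Y t = ⟨ǧ t, θ t - θ'⟩`. The subgradient hypothesis gives
`f t (θ t) - f t θ' ≤ E[Y t | ℱ t] = Y t + (E[Y t | ℱ t] - Y t)`.

Pathwise, the usual mirror-descent analysis bounds `∑ Y t`: with `D` the Bregman divergence of `Ψ`,
the three-point identity, the generalized Pythagorean inequality for the Bregman projection and
`1`-strong convexity of `Ψ` give `η ⟨ǧ t, θ t - θ'⟩ ≤ D(θ', θ t) - D(θ', θ (t+1)) + η² B_ǧ² / 2`,
which telescopes to `∑ Y t ≤ B_Ψ / η + T η B_ǧ² / 2 = (3/2) B_ǧ √(B_Ψ T)`.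

Strong convexity also bounds the diameter of `Θ` by `2 √(2 B_Ψ)`, so the martingale differences
`E[Y t | ℱ t] - Y t` are bounded by `C = 4 B_ǧ √(2 B_Ψ)`, and the Azuma–Hoeffding inequality
(via the conditional Hoeffding lemma) bounds their sum by `C √(2 T ln (1/δ))` outside an event of
probability `δ`. The constants then combine by `3/2 + 8 √L ≤ 2 √(2 + 32 L)`.
-/

open MeasureTheory

/-- The dual norm of a (semi)norm `N` on `Fin n → ℝ`:
`‖v‖_* = sup {⟨v, x⟩ : N x ≤ 1}`. -/
noncomputable def dualNorm {n : ℕ} (N : (Fin n → ℝ) → ℝ) (v : Fin n → ℝ) : ℝ :=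
  sSup ((fun x => ∑ i, v i * x i) '' {x | N x ≤ 1})

/-- The Bregman divergence associated with `Ψ` (whose gradient is `gradΨ`). -/
noncomputable def bregman {n : ℕ} (Ψ : (Fin n → ℝ) → ℝ)
    (gradΨ : (Fin n → ℝ) → (Fin n → ℝ)) (a b : Fin n → ℝ) : ℝ :=
  Ψ a - Ψ b - ∑ i, gradΨ b i * (a i - b i)

open Finset Real ProbabilityTheory

theorem Seminorm.exists_pos_mul_norm_le {E : Type*} [NormedAddCommGroup E] [NormedSpace ℝ E]
    [FiniteDimensional ℝ E] (p : Seminorm ℝ E) (hp : ∀ x, p x = 0 → x = 0) :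
    ∃ c > 0, ∀ x, c * ‖x‖ ≤ p x := by
  obtain ⟨c, hc, hcp⟩ := (isCompact_sphere (0 : E) 1).exists_forall_le'
    p.convexOn.locallyLipschitz.continuous.continuousOn
    (fun x hx => (apply_nonneg p x).lt_of_ne' fun h => by simp [hp x h] at hx)
  refine ⟨c, hc, fun x => ?_⟩
  obtain rfl | hx := eq_or_ne x 0
  · simp
  have hx' : 0 < ‖x‖ := norm_pos_iff.2 hx
  have h := hcp (‖x‖⁻¹ • x) (by simp [norm_smul, hx'.ne'])
  rw [map_smul_eq_mul, norm_inv, norm_norm] at h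
  calc c * ‖x‖ ≤ ‖x‖⁻¹ * p x * ‖x‖ := by gcongr
    _ = p x := by field_simp

theorem IsMinOn.apply_sub_nonneg_of_hasFDerivAt {E : Type*} [NormedAddCommGroup E]
    [NormedSpace ℝ E] {s : Set E} {F : E → ℝ} {L : E →L[ℝ] ℝ} {x y : E} (hmin : IsMinOn F s x)
    (hs : Convex ℝ s) (hF : HasFDerivAt F L x) (hx : x ∈ s) (hy : y ∈ s) : 0 ≤ L (y - x) :=
  hmin.localize.hasFDerivWithinAt_nonneg hF.hasFDerivWithinAt
    (sub_mem_posTangentConeAt_of_segment_subset (hs.segment_subset hx hy))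

section DualNorm

variable {n : ℕ}

def dotProductCLM (c : Fin n → ℝ) : (Fin n → ℝ) →L[ℝ] ℝ :=
  ∑ i, c i • ContinuousLinearMap.proj i

@[simp]
lemma dotProductCLM_apply (c x : Fin n → ℝ) : dotProductCLM c x = c ⬝ᵥ x := by
  simp [dotProductCLM, dotProduct]

lemma dotProductCLM_sub (c d : Fin n → ℝ) :
    dotProductCLM (c - d) = dotProductCLM c - dotProductCLM d := by
  ext x
  simp [sub_dotProduct]

variable (p : Seminorm ℝ (Fin n → ℝ)) (hp : ∀ x, p x = 0 → x = 0)
include hp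

lemma bddAbove_dotProduct_image (v : Fin n → ℝ) :
    BddAbove ((fun x => v ⬝ᵥ x) '' {x | p x ≤ 1}) := by
  obtain ⟨c, hc, hcp⟩ := p.exists_pos_mul_norm_le hp
  refine ⟨‖dotProductCLM v‖ * c⁻¹, ?_⟩
  rintro _ ⟨x, hx, rfl⟩
  have hxc : ‖x‖ ≤ c⁻¹ := by
    rw [← one_div, le_div_iff₀' hc]
    exact (hcp x).trans hx
  calc v ⬝ᵥ x = dotProductCLM v x := (dotProductCLM_apply v x).symm
    _ ≤ ‖dotProductCLM v‖ * ‖x‖ := (le_abs_self _).trans ((dotProductCLM v).le_opNorm x)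
    _ ≤ ‖dotProductCLM v‖ * c⁻¹ := by gcongr

lemma dotProduct_le_dualNorm {v x : Fin n → ℝ} (hx : p x ≤ 1) : v ⬝ᵥ x ≤ dualNorm p v :=
  le_csSup (bddAbove_dotProduct_image p hp v) ⟨x, hx, rfl⟩

lemma dualNorm_nonneg (v : Fin n → ℝ) : 0 ≤ dualNorm p v := by
  simpa using dotProduct_le_dualNorm p hp (v := v) (x := 0) (by simp)

lemma dotProduct_le_dualNorm_mul (v x : Fin n → ℝ) : v ⬝ᵥ x ≤ dualNorm p v * p x := by
  obtain hx | hx := (apply_nonneg p x).lt_or_eq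
  · have h := dotProduct_le_dualNorm p hp (v := v) (x := (p x)⁻¹ • x)
      (by rw [map_smul_eq_mul, norm_inv, Real.norm_of_nonneg hx.le, inv_mul_cancel₀ hx.ne'])
    rw [dotProduct_smul, smul_eq_mul, inv_mul_le_iff₀ hx] at h
    linarith
  · simp [hp x hx.symm]

lemma abs_dotProduct_le_dualNorm_mul (v x : Fin n → ℝ) : |v ⬝ᵥ x| ≤ dualNorm p v * p x := by
  refine abs_le.2 ⟨?_, dotProduct_le_dualNorm_mul p hp v x⟩
  have h := dotProduct_le_dualNorm_mul p hp v (-x)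
  rw [dotProduct_neg, map_neg_eq_map] at h
  linarith

end DualNorm

section Bregman

variable {n : ℕ} {Θ : Set (Fin n → ℝ)} {p : Seminorm ℝ (Fin n → ℝ)}
  {Ψ : (Fin n → ℝ) → ℝ} {gradΨ : (Fin n → ℝ) → Fin n → ℝ}
  (hp : ∀ x, p x = 0 → x = 0)
  (hΨdiff : ∀ x, HasFDerivAt Ψ (dotProductCLM (gradΨ x)) x)
  (hstrong : ∀ x y, Ψ x + gradΨ x ⬝ᵥ (y - x) + 1 / 2 * p (y - x) ^ 2 ≤ Ψ y)

lemma bregman_eq_dotProduct (a b : Fin n → ℝ) :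
    bregman Ψ gradΨ a b = Ψ a - Ψ b - gradΨ b ⬝ᵥ (a - b) := rfl

lemma bregman_three_point (a b c : Fin n → ℝ) :
    bregman Ψ gradΨ a c
      = bregman Ψ gradΨ a b + bregman Ψ gradΨ b c + (gradΨ b - gradΨ c) ⬝ᵥ (a - b) := by
  simp only [bregman_eq_dotProduct, sub_dotProduct, dotProduct_sub]
  ring

include hstrong in
lemma half_sq_le_bregman (a b : Fin n → ℝ) : 1 / 2 * p (a - b) ^ 2 ≤ bregman Ψ gradΨ a b := by
  rw [bregman_eq_dotProduct]
  linarith [hstrong b a]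

include hΨdiff in
lemma hasFDerivAt_bregman_left (x z : Fin n → ℝ) :
    HasFDerivAt (bregman Ψ gradΨ · z) (dotProductCLM (gradΨ x - gradΨ z)) x := by
  have h : (bregman Ψ gradΨ · z)
      = fun y => (Ψ y - Ψ z) - (dotProductCLM (gradΨ z) y - gradΨ z ⬝ᵥ z) := by
    ext y
    simp [bregman_eq_dotProduct, dotProduct_sub]
  rw [h, dotProductCLM_sub]
  exact ((hΨdiff x).sub_const (Ψ z)).sub
    ((dotProductCLM (gradΨ z)).hasFDerivAt.sub_const (gradΨ z ⬝ᵥ z))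

include hΨdiff in
/-- The generalized Pythagorean inequality for the Bregman projection `x` of `z` onto `Θ`. -/
lemma bregman_add_bregman_le_of_isMinOn (hΘ : Convex ℝ Θ) {x z y : Fin n → ℝ} (hx : x ∈ Θ)
    (hmin : IsMinOn (bregman Ψ gradΨ · z) Θ x) (hy : y ∈ Θ) :
    bregman Ψ gradΨ y x + bregman Ψ gradΨ x z ≤ bregman Ψ gradΨ y z := by
  have h := hmin.apply_sub_nonneg_of_hasFDerivAt hΘ (hasFDerivAt_bregman_left hΨdiff x z) hx hy
  rw [dotProductCLM_apply] at h
  linarith [bregman_three_point (Ψ := Ψ) (gradΨ := gradΨ) y x z]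

include hΨdiff in
lemma bregman_le_of_isMinOn (hΘ : Convex ℝ Θ) {x₀ y : Fin n → ℝ} (hx₀ : x₀ ∈ Θ)
    (hmin : IsMinOn Ψ Θ x₀) (hy : y ∈ Θ) : bregman Ψ gradΨ y x₀ ≤ Ψ y - Ψ x₀ := by
  have h := hmin.apply_sub_nonneg_of_hasFDerivAt hΘ (hΨdiff x₀) hx₀ hy
  rw [dotProductCLM_apply] at h
  rw [bregman_eq_dotProduct]
  linarith

include hΨdiff hstrong in
lemma seminorm_sub_le_of_isMinOn (hΘ : Convex ℝ Θ) {B : ℝ} (hΨ : ∀ x, 0 ≤ Ψ x)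
    (hB : ∀ x ∈ Θ, Ψ x ≤ B) {x₀ y : Fin n → ℝ} (hx₀ : x₀ ∈ Θ) (hmin : IsMinOn Ψ Θ x₀)
    (hy : y ∈ Θ) : p (y - x₀) ≤ √(2 * B) := by
  refine Real.le_sqrt_of_sq_le ?_
  linarith [half_sq_le_bregman hstrong y x₀, bregman_le_of_isMinOn hΨdiff hΘ hx₀ hmin hy,
    hΨ x₀, hB y hy]

include hΨdiff hstrong in
lemma seminorm_sub_le_two_sqrt (hΘ : Convex ℝ Θ) {B : ℝ} (hΨ : ∀ x, 0 ≤ Ψ x)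
    (hB : ∀ x ∈ Θ, Ψ x ≤ B) {x₀ : Fin n → ℝ} (hx₀ : x₀ ∈ Θ) (hmin : IsMinOn Ψ Θ x₀)
    {x y : Fin n → ℝ} (hx : x ∈ Θ) (hy : y ∈ Θ) : p (x - y) ≤ 2 * √(2 * B) := by
  calc p (x - y) = p ((x - x₀) - (y - x₀)) := by rw [sub_sub_sub_cancel_right]
    _ ≤ p (x - x₀) + p (y - x₀) := map_sub_le_add p _ _
    _ ≤ 2 * √(2 * B) := by
      linarith [seminorm_sub_le_of_isMinOn hΨdiff hstrong hΘ hΨ hB hx₀ hmin hx,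
        seminorm_sub_le_of_isMinOn hΨdiff hstrong hΘ hΨ hB hx₀ hmin hy]

include hp hΨdiff hstrong in
lemma abs_dotProduct_sub_le (hΘ : Convex ℝ Θ) {B : ℝ} (hΨ : ∀ x, 0 ≤ Ψ x)
    (hB : ∀ x ∈ Θ, Ψ x ≤ B) {x₀ : Fin n → ℝ} (hx₀ : x₀ ∈ Θ) (hmin : IsMinOn Ψ Θ x₀)
    {Bg : ℝ} {g x y : Fin n → ℝ} (hg : dualNorm p g ≤ Bg) (hx : x ∈ Θ) (hy : y ∈ Θ) :
    |g ⬝ᵥ (x - y)| ≤ Bg * (2 * √(2 * B)) :=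
  (abs_dotProduct_le_dualNorm_mul p hp g _).trans <|
    mul_le_mul hg (seminorm_sub_le_two_sqrt hΨdiff hstrong hΘ hΨ hB hx₀ hmin hx hy)
      (apply_nonneg p _) ((dualNorm_nonneg p hp g).trans hg)

include hp hΨdiff hstrong in
lemma mirror_step_le (hΘ : Convex ℝ Θ) {η Bg : ℝ} (hη : 0 ≤ η) {x z x' θ g : Fin n → ℝ}
    (hg : dualNorm p g ≤ Bg) (hmirror : gradΨ z = gradΨ x - η • g) (hx' : x' ∈ Θ)
    (hproj : IsMinOn (bregman Ψ gradΨ · z) Θ x') (hθ : θ ∈ Θ) :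
    η * (g ⬝ᵥ (x - θ)) ≤ bregman Ψ gradΨ θ x - bregman Ψ gradΨ θ x' + η ^ 2 * Bg ^ 2 / 2 := by
  have hthree := bregman_three_point (Ψ := Ψ) (gradΨ := gradΨ) θ x z
  rw [show gradΨ x - gradΨ z = η • g by rw [hmirror]; abel, smul_dotProduct, smul_eq_mul,
    ← neg_sub x θ, dotProduct_neg] at hthree
  have hpyth := bregman_add_bregman_le_of_isMinOn hΨdiff hΘ hx' hproj hθ
  have hdescent : bregman Ψ gradΨ x z - bregman Ψ gradΨ x' z
      ≤ η * (g ⬝ᵥ (x - x')) - 1 / 2 * p (x' - x) ^ 2 := by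
    have := hstrong x x'
    simp only [bregman_eq_dotProduct, hmirror, dotProduct_sub, sub_dotProduct, smul_dotProduct,
      smul_eq_mul] at this ⊢
    linarith
  have hdual : η * (g ⬝ᵥ (x - x')) ≤ η * (Bg * p (x' - x)) := by
    refine mul_le_mul_of_nonneg_left ?_ hη
    rw [map_sub_rev]
    exact (dotProduct_le_dualNorm_mul p hp g _).trans
      (mul_le_mul_of_nonneg_right hg (apply_nonneg p _))
  nlinarith [sq_nonneg (η * Bg - p (x' - x))]

include hp hΨdiff hstrong in
lemma sum_dotProduct_sub_le (hΘ : Convex ℝ Θ) {B Bg η : ℝ} (hη : 0 < η) (hΨ : ∀ x, 0 ≤ Ψ x)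
    (hB : ∀ x ∈ Θ, Ψ x ≤ B) {T : ℕ} {θ z g : ℕ → Fin n → ℝ}
    (hinit : θ 0 ∈ Θ ∧ IsMinOn Ψ Θ (θ 0)) (hg : ∀ t < T, dualNorm p (g t) ≤ Bg)
    (hmirror : ∀ t < T, gradΨ (z (t + 1)) = gradΨ (θ t) - η • g t)
    (hproj : ∀ t < T, θ (t + 1) ∈ Θ ∧ IsMinOn (bregman Ψ gradΨ · (z (t + 1))) Θ (θ (t + 1)))
    {θ' : Fin n → ℝ} (hθ' : θ' ∈ Θ) :
    ∑ t ∈ range T, g t ⬝ᵥ (θ t - θ') ≤ B / η + T * η * Bg ^ 2 / 2 := by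
  have hstep (t : ℕ) (ht : t ∈ range T) := mirror_step_le hp hΨdiff hstrong hΘ hη.le
    (hg t (mem_range.1 ht)) (hmirror t (mem_range.1 ht)) (hproj t (mem_range.1 ht)).1
    (hproj t (mem_range.1 ht)).2 hθ'
  have htelescope := sum_le_sum hstep
  rw [sum_add_distrib, sum_range_sub' (fun t => bregman Ψ gradΨ θ' (θ t)), ← mul_sum, sum_const,
    card_range, nsmul_eq_mul] at htelescope
  have h₀ := bregman_le_of_isMinOn hΨdiff hΘ hinit.1 hinit.2 hθ'
  have hT := (half_sq_le_bregman hstrong θ' (θ T)).trans' (by positivity)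
  rw [div_add' _ _ _ hη.ne', le_div_iff₀ hη]
  nlinarith [hΨ (θ 0), hB θ' hθ']

include hp hΨdiff hstrong in
lemma sum_dotProduct_sub_le_of_eq_sqrt (hΘ : Convex ℝ Θ) {B Bg η : ℝ} {T : ℕ} (hT : 0 < T)
    (hη : η = √(B / (T * Bg ^ 2))) (hΨ : ∀ x, 0 ≤ Ψ x) (hB : ∀ x ∈ Θ, Ψ x ≤ B)
    {θ z g : ℕ → Fin n → ℝ} (hinit : θ 0 ∈ Θ ∧ IsMinOn Ψ Θ (θ 0))
    (hg : ∀ t < T, dualNorm p (g t) ≤ Bg)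
    (hmirror : ∀ t < T, gradΨ (z (t + 1)) = gradΨ (θ t) - η • g t)
    (hproj : ∀ t < T, θ (t + 1) ∈ Θ ∧ IsMinOn (bregman Ψ gradΨ · (z (t + 1))) Θ (θ (t + 1)))
    {θ' : Fin n → ℝ} (hθ' : θ' ∈ Θ) :
    ∑ t ∈ range T, g t ⬝ᵥ (θ t - θ') ≤ 3 / 2 * Bg * √(B * T) := by
  have hBg : 0 ≤ Bg := (dualNorm_nonneg p hp _).trans (hg 0 hT)
  have hB₀ : 0 ≤ B := (hΨ _).trans (hB _ hinit.1)
  obtain hη0 | hηpos := (show 0 ≤ η from hη ▸ Real.sqrt_nonneg _).eq_or_lt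
  · -- `η = 0` forces `B = 0` or `Bg = 0`, and then every term is `≤ 0` without dividing by `η`.
    have hmem : ∀ t ≤ T, θ t ∈ Θ
      | 0, _ => hinit.1
      | t + 1, ht => (hproj t ht).1
    have hzero : Bg * (2 * √(2 * B)) = 0 := by
      have h : B / (T * Bg ^ 2) = 0 :=
        le_antisymm (Real.sqrt_eq_zero'.1 (hη ▸ hη0.symm)) (by positivity)
      rcases div_eq_zero_iff.1 h with h | h
      · simp [h]
      · obtain rfl : Bg = 0 := by simpa [hT.ne'] using h
        simp
    calc ∑ t ∈ range T, g t ⬝ᵥ (θ t - θ') ≤ ∑ t ∈ range T, (0 : ℝ) := by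
          refine sum_le_sum fun t ht => ?_
          rw [← hzero]
          exact (le_abs_self _).trans (abs_dotProduct_sub_le hp hΨdiff hstrong hΘ hΨ hB hinit.1
            hinit.2 (hg t (mem_range.1 ht)) (hmem t (mem_range.1 ht).le) hθ')
      _ ≤ 3 / 2 * Bg * √(B * T) := by
          simp only [sum_const_zero]
          positivity
  · refine (sum_dotProduct_sub_le hp hΨdiff hstrong hΘ hηpos hΨ hB hinit hg hmirror hproj
      hθ').trans_eq ?_
    have hden : (T : ℝ) * Bg ^ 2 ≠ 0 := by
      intro h
      simp [hη, h] at hηpos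
    have hη2 : B = η ^ 2 * (T * Bg ^ 2) := by
      rw [hη, Real.sq_sqrt (by positivity), div_mul_cancel₀ _ hden]
    have hs : √(B * T) = η * T * Bg := by
      rw [hη2, show η ^ 2 * (T * Bg ^ 2) * T = (η * T * Bg) ^ 2 by ring,
        Real.sqrt_sq (by positivity)]
    rw [hs, hη2]
    field_simp
    ring

end Bregman

section Azuma

variable {Ω : Type*} {m0 : MeasurableSpace Ω} {P : Measure Ω}

lemma exp_mul_le_cosh_add_mul {c x : ℝ} (hx : |x| ≤ c) (lam : ℝ) :
    exp (lam * x) ≤ cosh (lam * c) + sinh (lam * c) / c * x := by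
  obtain rfl | hc := (abs_nonneg x |>.trans hx).eq_or_lt
  · simp [abs_nonpos_iff.1 hx]
  obtain ⟨hx₁, hx₂⟩ := abs_le.1 hx
  have key := convexOn_exp.2 (Set.mem_univ (lam * c)) (Set.mem_univ (-(lam * c)))
    (show 0 ≤ (c + x) / (2 * c) from div_nonneg (by linarith) (by linarith))
    (show 0 ≤ (c - x) / (2 * c) from div_nonneg (by linarith) (by linarith)) (by field_simp; ring)
  have harg : (c + x) / (2 * c) * (lam * c) + (c - x) / (2 * c) * -(lam * c) = lam * x := by
    field_simp
    ring
  simp only [smul_eq_mul, harg] at key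
  refine key.trans_eq ?_
  rw [cosh_eq, sinh_eq]
  field_simp
  ring

lemma ae_abs_sum_le {X : ℕ → Ω → ℝ} {c : ℝ} {T : ℕ} (hbdd : ∀ t < T, ∀ᵐ ω ∂P, |X t ω| ≤ c) :
    ∀ᵐ ω ∂P, |∑ t ∈ range T, X t ω| ≤ T * c := by
  filter_upwards [(Filter.eventually_all_finset _).2 fun t ht => hbdd t (mem_range.1 ht)] with ω h
  calc |∑ t ∈ range T, X t ω| ≤ ∑ t ∈ range T, |X t ω| := abs_sum_le_sum_abs _ _
    _ ≤ ∑ t ∈ range T, c := sum_le_sum h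
    _ = T * c := by simp

variable [IsProbabilityMeasure P]

lemma integrable_exp_mul_of_ae_abs_le {X : Ω → ℝ} (hX : AEMeasurable X P) {c : ℝ}
    (hbdd : ∀ᵐ ω ∂P, |X ω| ≤ c) (lam : ℝ) : Integrable (fun ω => exp (lam * X ω)) P :=
  integrable_exp_mul_of_mem_Icc hX (hbdd.mono fun _ h => abs_le.1 h)

/-- Conditional Hoeffding lemma. -/
lemma condExp_exp_mul_le {m : MeasurableSpace Ω} (hm : m ≤ m0) {X : Ω → ℝ}
    (hX : AEMeasurable X P) {c : ℝ} (hbdd : ∀ᵐ ω ∂P, |X ω| ≤ c) (hcond : P[X|m] =ᵐ[P] 0) (lam : ℝ) :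
    P[fun ω => exp (lam * X ω)|m] ≤ᵐ[P] fun _ => exp (lam ^ 2 * c ^ 2 / 2) := by
  have hXint : Integrable X P := Integrable.of_mem_Icc (-c) c hX (hbdd.mono fun _ h => abs_le.1 h)
  set s := sinh (lam * c) / c
  have hchord := condExp_mono (m := m) (integrable_exp_mul_of_ae_abs_le hX hbdd lam)
    ((integrable_const (cosh (lam * c))).add (hXint.const_mul s))
    (hbdd.mono fun ω h => exp_mul_le_cosh_add_mul h lam)
  have haffine : P[fun ω => cosh (lam * c) + s * X ω|m] =ᵐ[P] fun _ => cosh (lam * c) := by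
    filter_upwards [condExp_add (integrable_const (cosh (lam * c))) (hXint.const_mul s) m,
      condExp_smul s X m, hcond] with ω h₁ h₂ h₃
    have h₂ : P[fun ω => s * X ω|m] ω = s * P[X|m] ω := h₂
    change P[(fun _ => cosh (lam * c)) + fun ω => s * X ω|m] ω = _
    rw [h₁, Pi.add_apply, h₂, h₃, condExp_const hm]
    simp
  filter_upwards [hchord, haffine] with ω h₁ h₂
  calc P[fun ω => exp (lam * X ω)|m] ω ≤ cosh (lam * c) := h₁.trans_eq h₂
    _ ≤ exp ((lam * c) ^ 2 / 2) := cosh_le_exp_half_sq _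
    _ = exp (lam ^ 2 * c ^ 2 / 2) := by ring_nf

lemma integral_exp_mul_sum_le {ℱ : Filtration ℕ m0} {X : ℕ → Ω → ℝ} {c : ℝ} (lam : ℝ)
    (hX : ∀ t, StronglyMeasurable[ℱ (t + 1)] (X t)) {T : ℕ}
    (hbdd : ∀ t < T, ∀ᵐ ω ∂P, |X t ω| ≤ c) (hcond : ∀ t < T, P[X t|ℱ t] =ᵐ[P] 0) :
    ∫ ω, exp (lam * ∑ t ∈ range T, X t ω) ∂P ≤ exp (T * (lam ^ 2 * c ^ 2 / 2)) := by
  induction T with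
  | zero => simp
  | succ k ih =>
    have hS : StronglyMeasurable[ℱ k] fun ω => ∑ t ∈ range k, X t ω :=
      Finset.stronglyMeasurable_fun_sum _ fun t ht => (hX t).mono (ℱ.mono (by simpa using ht))
    have hexpS : StronglyMeasurable[ℱ k] fun ω => exp (lam * ∑ t ∈ range k, X t ω) :=
      continuous_exp.comp_stronglyMeasurable (hS.const_mul lam)
    have hint (j : ℕ) (hj : j ≤ k + 1) :
        Integrable (fun ω => exp (lam * ∑ t ∈ range j, X t ω)) P :=
      integrable_exp_mul_of_ae_abs_le
        (Finset.measurable_fun_sum _ fun t _ => ((hX t).mono (ℱ.le _)).measurable).aemeasurable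
        (ae_abs_sum_le fun t ht => hbdd t (by omega)) lam
    have hXk : Integrable (fun ω => exp (lam * X k ω)) P :=
      integrable_exp_mul_of_ae_abs_le ((hX k).mono (ℱ.le _)).measurable.aemeasurable
        (hbdd k (by omega)) lam
    have hsplit : (fun ω => exp (lam * ∑ t ∈ range (k + 1), X t ω))
        = (fun ω => exp (lam * ∑ t ∈ range k, X t ω)) * fun ω => exp (lam * X k ω) := by
      ext ω
      simp [sum_range_succ, mul_add, exp_add]
    have hpull := condExp_mul_of_stronglyMeasurable_left hexpS (hsplit ▸ hint (k + 1) le_rfl) hXk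
    rw [← hsplit] at hpull
    have hstep := condExp_exp_mul_le (ℱ.le k) ((hX k).mono (ℱ.le _)).measurable.aemeasurable
      (hbdd k (by omega)) (hcond k (by omega)) lam
    calc ∫ ω, exp (lam * ∑ t ∈ range (k + 1), X t ω) ∂P
        = ∫ ω, P[fun ω => exp (lam * ∑ t ∈ range (k + 1), X t ω)|ℱ k] ω ∂P :=
          (integral_condExp (ℱ.le k)).symm
      _ ≤ ∫ ω, exp (lam * ∑ t ∈ range k, X t ω) * exp (lam ^ 2 * c ^ 2 / 2) ∂P := by
          refine integral_mono_ae integrable_condExp ((hint k (by omega)).mul_const _) ?_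
          filter_upwards [hpull, hstep] with ω h₁ h₂
          rw [h₁, Pi.mul_apply]
          exact mul_le_mul_of_nonneg_left h₂ (exp_pos _).le
      _ ≤ exp (k * (lam ^ 2 * c ^ 2 / 2)) * exp (lam ^ 2 * c ^ 2 / 2) := by
          rw [integral_mul_const]
          gcongr
          exact ih (fun t ht => hbdd t (by omega)) (fun t ht => hcond t (by omega))
      _ = exp ((k + 1 : ℕ) * (lam ^ 2 * c ^ 2 / 2)) := by
          rw [← exp_add]
          push_cast
          ring_nf

/-- The Azuma–Hoeffding inequality. -/
lemma measure_sum_gt_le {ℱ : Filtration ℕ m0} {X : ℕ → Ω → ℝ} {c L : ℝ} (hc : 0 ≤ c) (hL : 0 ≤ L)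
    (hX : ∀ t, StronglyMeasurable[ℱ (t + 1)] (X t)) {T : ℕ}
    (hbdd : ∀ t < T, ∀ᵐ ω ∂P, |X t ω| ≤ c) (hcond : ∀ t < T, P[X t|ℱ t] =ᵐ[P] 0) :
    P {ω | c * √(2 * T * L) < ∑ t ∈ range T, X t ω} ≤ ENNReal.ofReal (exp (-L)) := by
  set a := c * √(2 * T * L)
  obtain hTc | hTc := (show 0 ≤ (T : ℝ) * c by positivity).eq_or_lt
  · have hnull : P {ω | a < ∑ t ∈ range T, X t ω} = 0 := by
      refine measure_eq_zero_iff_ae_notMem.2 ?_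
      filter_upwards [ae_abs_sum_le hbdd] with ω h
      rw [← hTc] at h
      exact not_lt.2 ((le_of_abs_le h).trans (by positivity))
    simp [hnull]
  set lam := a / (T * c ^ 2)
  have hint : Integrable (fun ω => exp (lam * ∑ t ∈ range T, X t ω)) P :=
    integrable_exp_mul_of_ae_abs_le
      (Finset.measurable_fun_sum _ fun t _ => ((hX t).mono (ℱ.le _)).measurable).aemeasurable
      (ae_abs_sum_le hbdd) lam
  have hmarkov := measure_ge_le_exp_mul_mgf a (by positivity) hint
  have hmgf := integral_exp_mul_sum_le lam hX hbdd hcond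
  have hexp : -lam * a + T * (lam ^ 2 * c ^ 2 / 2) = -L := by
    have ha : √(2 * T * L) ^ 2 = 2 * T * L := Real.sq_sqrt (by positivity)
    have hT : (T : ℝ) ≠ 0 := by rintro h; simp [h] at hTc
    have hc : c ≠ 0 := by rintro rfl; simp at hTc
    simp only [lam]
    field_simp
    linear_combination (-c ^ 2) * ha
  calc P {ω | a < ∑ t ∈ range T, X t ω} ≤ P {ω | a ≤ ∑ t ∈ range T, X t ω} :=
        measure_mono (Set.ofPred_subset_ofPred.2 fun _ h => h.le)
    _ = ENNReal.ofReal (P.real {ω | a ≤ ∑ t ∈ range T, X t ω}) :=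
        (ofReal_measureReal (measure_ne_top P _)).symm
    _ ≤ ENNReal.ofReal (exp (-L)) := by
        refine ENNReal.ofReal_le_ofReal (hmarkov.trans ?_)
        rw [← hexp, exp_add]
        exact mul_le_mul_of_nonneg_left hmgf (exp_pos _).le

end Azuma

section Stochastic

variable {Ω : Type*} {m0 : MeasurableSpace Ω} {P : Measure Ω} [IsProbabilityMeasure P]

lemma integrable_apply_of_ae_dualNorm_le {n : ℕ} {p : Seminorm ℝ (Fin n → ℝ)}
    (hp : ∀ x, p x = 0 → x = 0) {g : Ω → Fin n → ℝ} (hg : Measurable g) {B : ℝ}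
    (hB : ∀ᵐ ω ∂P, dualNorm p (g ω) ≤ B) (i : Fin n) : Integrable (fun ω => g ω i) P := by
  refine Integrable.of_bound ((measurable_pi_apply i).comp hg).aestronglyMeasurable
    (B * p (Pi.single i 1)) (hB.mono fun ω h => ?_)
  have := abs_dotProduct_le_dualNorm_mul p hp (g ω) (Pi.single i 1)
  rw [dotProduct_single, mul_one] at this
  exact this.trans (mul_le_mul_of_nonneg_right h (apply_nonneg p _))

lemma condExp_dotProduct_ae_eq {n : ℕ} {m : MeasurableSpace Ω} (hm : m ≤ m0)
    {g h : Ω → Fin n → ℝ} (hg : ∀ i, Integrable (fun ω => g ω i) P)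
    (hh : StronglyMeasurable[m] h) {R : ℝ} (hR : ∀ ω, ‖h ω‖ ≤ R) :
    P[fun ω => g ω ⬝ᵥ h ω|m] =ᵐ[P] fun ω => (fun i => P[fun ω' => g ω' i|m] ω) ⬝ᵥ h ω := by
  have hcoord (i : Fin n) : StronglyMeasurable[m] fun ω => h ω i :=
    (continuous_apply i).comp_stronglyMeasurable hh
  have hbound (i : Fin n) : ∀ᵐ ω ∂P, ‖h ω i‖ ≤ R :=
    ae_of_all _ fun ω => (norm_le_pi_norm (h ω) i).trans (hR ω)
  have hsum : (fun ω => g ω ⬝ᵥ h ω) = ∑ i, fun ω => h ω i * g ω i := by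
    ext ω
    simp [dotProduct, mul_comm]
  have hterms : ∀ᵐ ω ∂P, ∀ i, P[fun ω => h ω i * g ω i|m] ω = h ω i * P[fun ω => g ω i|m] ω :=
    ae_all_iff.2 fun i =>
      condExp_stronglyMeasurable_mul_of_bound hm (hcoord i) (hg i) R (hbound i)
  filter_upwards [condExp_finsetSum (fun i _ =>
      (hg i).bdd_mul ((hcoord i).mono hm).aestronglyMeasurable (hbound i)) m, hterms]
    with ω h₁ h₂
  rw [hsum, h₁, Finset.sum_apply, dotProduct]
  exact sum_congr rfl fun i _ => (h₂ i).trans (mul_comm _ _)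

lemma ae_sub_le_condExp_dotProduct {n : ℕ} {m : MeasurableSpace Ω} (hm : m ≤ m0)
    {F : (Fin n → ℝ) → ℝ} {g x : Ω → Fin n → ℝ} {y : Fin n → ℝ}
    (hg : ∀ i, Integrable (fun ω => g ω i) P) (hx : Measurable[m] x) {R : ℝ}
    (hR : ∀ ω, ‖x ω‖ ≤ R)
    (hsub : ∀ᵐ ω ∂P, F (x ω) + (fun i => P[fun ω' => g ω' i|m] ω) ⬝ᵥ (y - x ω) ≤ F y) :
    ∀ᵐ ω ∂P, F (x ω) - F y ≤ P[fun ω => g ω ⬝ᵥ (x ω - y)|m] ω := by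
  filter_upwards [hsub, condExp_dotProduct_ae_eq hm hg (hx.sub_const y).stronglyMeasurable
    (R := R + ‖y‖) fun ω => (norm_sub_le _ _).trans (add_le_add_left (hR ω) _)] with ω h₁ h₂
  rw [h₂, ← neg_sub y, dotProduct_neg]
  linarith

lemma measure_sum_condExp_sub_gt_le {ℱ : Filtration ℕ m0} {Y : ℕ → Ω → ℝ} {C L : ℝ}
    (hC : 0 ≤ C) (hL : 0 ≤ L) (hY : ∀ t, StronglyMeasurable[ℱ (t + 1)] (Y t)) {T : ℕ}
    (hbdd : ∀ t < T, ∀ᵐ ω ∂P, |Y t ω| ≤ C) :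
    P {ω | 2 * C * √(2 * T * L) < ∑ t ∈ range T, (P[Y t|ℱ t] ω - Y t ω)}
      ≤ ENNReal.ofReal (exp (-L)) := by
  have hint (t : ℕ) (ht : t < T) : Integrable (Y t) P :=
    Integrable.of_mem_Icc (-C) C ((hY t).mono (ℱ.le _)).measurable.aemeasurable
      ((hbdd t ht).mono fun ω h => abs_le.1 h)
  refine measure_sum_gt_le (by positivity) hL
    (fun t => (stronglyMeasurable_condExp.mono (ℱ.mono t.le_succ)).sub (hY t)) (fun t ht => ?_)
    (fun t ht => ?_)
  · filter_upwards [hbdd t ht, ae_bdd_abs_condExp_of_ae_bdd_abs (m := ℱ t) (hbdd t ht)]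
      with ω h₁ h₂
    exact (abs_sub _ _).trans (by linarith)
  · filter_upwards [condExp_sub integrable_condExp (hint t ht) (ℱ t)] with ω h
    rw [h, Pi.sub_apply, condExp_of_stronglyMeasurable (ℱ.le t) stronglyMeasurable_condExp
      integrable_condExp, sub_self, Pi.zero_apply]

-- `S` need not be measurable: the event in the theorem involves the arbitrary functions `f t`.
lemma ofReal_one_sub_le_measure {S B : Set Ω} {δ : ℝ} (hδ : 0 ≤ δ) (hB : P B ≤ ENNReal.ofReal δ)
    (hS : ∀ᵐ ω ∂P, ω ∉ B → ω ∈ S) : ENNReal.ofReal (1 - δ) ≤ P S := by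
  have hSc : P Sᶜ ≤ ENNReal.ofReal δ :=
    (measure_mono_ae (hS.mono fun ω h hω => by_contra fun hB => hω (h hB))).trans hB
  rw [ENNReal.ofReal_sub _ hδ, ENNReal.ofReal_one, tsub_le_iff_right, ← measure_univ (μ := P)]
  exact (measure_univ_le_add_compl S).trans (add_le_add_right hSc _)

lemma ofReal_one_sub_le_measure_sum_le {ℱ : Filtration ℕ m0} {Y Z : ℕ → Ω → ℝ} {C R δ : ℝ}
    (hC : 0 ≤ C) (hδ : 0 < δ) (hδ₁ : δ ≤ 1) (hY : ∀ t, StronglyMeasurable[ℱ (t + 1)] (Y t))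
    {T : ℕ} (hbdd : ∀ t < T, ∀ᵐ ω ∂P, |Y t ω| ≤ C)
    (hZ : ∀ t < T, ∀ᵐ ω ∂P, Z t ω ≤ P[Y t|ℱ t] ω) (hR : ∀ᵐ ω ∂P, ∑ t ∈ range T, Y t ω ≤ R) :
    ENNReal.ofReal (1 - δ)
      ≤ P {ω | ∑ t ∈ range T, Z t ω ≤ R + 2 * C * √(2 * T * log (1 / δ))} := by
  refine ofReal_one_sub_le_measure hδ.le
    ((measure_sum_condExp_sub_gt_le hC (log_nonneg (one_le_one_div hδ hδ₁)) hY hbdd).trans_eq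
      (by rw [one_div, log_inv, neg_neg, exp_log hδ])) ?_
  filter_upwards [hR, (Filter.eventually_all_finset (range T)).2
    fun t ht => hZ t (mem_range.1 ht)] with ω hRω hZω hgood
  rw [not_lt] at hgood
  calc ∑ t ∈ range T, Z t ω ≤ ∑ t ∈ range T, P[Y t|ℱ t] ω := sum_le_sum hZω
    _ = ∑ t ∈ range T, Y t ω + ∑ t ∈ range T, (P[Y t|ℱ t] ω - Y t ω) := by
      rw [← sum_add_distrib]
      simp
    _ ≤ R + 2 * C * √(2 * T * log (1 / δ)) := add_le_add hRω hgood

end Stochastic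

lemma three_halves_mul_add_le {Bg B L : ℝ} {T : ℕ} (hBg : 0 ≤ Bg) (hB : 0 ≤ B) (hL : 0 ≤ L)
    (hT : 0 < T) :
    3 / 2 * Bg * √(B * T) + 2 * (Bg * (2 * √(2 * B))) * √(2 * T * L)
      ≤ T * (2 * Bg * √(2 * B * (1 + 16 * L) / T)) := by
  have hT' : (0 : ℝ) < T := by exact_mod_cast hT
  have hprod : √(2 * B) * √(2 * T * L) = 2 * (√(B * T) * √L) := by
    rw [← Real.sqrt_mul (by positivity), ← Real.sqrt_mul (by positivity),
      show 2 * B * (2 * T * L) = 2 ^ 2 * (B * T * L) by ring, Real.sqrt_mul (by positivity),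
      Real.sqrt_sq zero_le_two]
  have hquot : T * √(2 * B * (1 + 16 * L) / T) = √(B * T) * √(2 + 32 * L) := by
    rw [← Real.sqrt_mul (by positivity), show 2 * B * (1 + 16 * L) / T
      = B * T * (2 + 32 * L) / T ^ 2 by field_simp; ring, Real.sqrt_div' _ (by positivity),
      Real.sqrt_sq hT'.le]
    field_simp
  have key : 3 / 2 + 8 * √L ≤ 2 * √(2 + 32 * L) := by
    rw [show 2 * √(2 + 32 * L) = √(2 ^ 2 * (2 + 32 * L)) by
      rw [Real.sqrt_mul (by positivity), Real.sqrt_sq zero_le_two]]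
    refine Real.le_sqrt_of_sq_le ?_
    nlinarith [Real.sq_sqrt hL, sq_nonneg (8 * √L - 3 / 2)]
  calc 3 / 2 * Bg * √(B * T) + 2 * (Bg * (2 * √(2 * B))) * √(2 * T * L)
      = Bg * √(B * T) * (3 / 2 + 8 * √L) := by linear_combination 4 * Bg * hprod
    _ ≤ Bg * √(B * T) * (2 * √(2 + 32 * L)) := by gcongr
    _ = T * (2 * Bg * √(2 * B * (1 + 16 * L) / T)) := by linear_combination -2 * Bg * hquot

theorem stochastic_mirror_descent_general
    {n : ℕ}
    {Ω : Type*} {m0 : MeasurableSpace Ω} (P : Measure Ω) [IsProbabilityMeasure P]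
    (ℱ : Filtration ℕ m0)
    (Θ : Set (Fin n → ℝ)) (hΘcomp : IsCompact Θ) (hΘconv : Convex ℝ Θ)
    (f : ℕ → (Fin n → ℝ) → ℝ)
    -- `N` is a norm on `ℝ^n`
    (N : (Fin n → ℝ) → ℝ)
    (hNtri : ∀ x y, N (x + y) ≤ N x + N y)
    (hNsmul : ∀ (c : ℝ) x, N (c • x) = |c| * N x)
    (hNdef : ∀ x, N x = 0 → x = 0)
    -- `Ψ` is nonnegative and differentiable, with gradient `gradΨ`
    (Ψ : (Fin n → ℝ) → ℝ) (gradΨ : (Fin n → ℝ) → (Fin n → ℝ))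
    (hΨnonneg : ∀ x, 0 ≤ Ψ x)
    (hΨdiff : ∀ x, HasFDerivAt Ψ
      (∑ i, gradΨ x i • (ContinuousLinearMap.proj i : (Fin n → ℝ) →L[ℝ] ℝ)) x)
    -- `Ψ` is `1`-strongly convex w.r.t. `N`
    (hstrong : ∀ x y,
      Ψ x + (∑ i, gradΨ x i * (y i - x i)) + (1 / 2) * (N (y - x)) ^ 2 ≤ Ψ y)
    (BΨ Bg δ : ℝ) (hδ : 0 < δ) (hBΨ : ∀ x ∈ Θ, Ψ x ≤ BΨ)
    (T : ℕ) (hT : 0 < T)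
    (η : ℝ) (hη : η = Real.sqrt (BΨ / (T * Bg ^ 2)))
    (θs θtil : ℕ → Ω → Fin n → ℝ) (gs : ℕ → Ω → Fin n → ℝ)
    -- `θ^(1)` minimizes `Ψ` over `Θ`
    (hinit : ∀ ω, θs 0 ω ∈ Θ ∧ ∀ y ∈ Θ, Ψ (θs 0 ω) ≤ Ψ y)
    -- adaptedness
    (hθmeas : ∀ t, Measurable[ℱ t] (θs t))
    (hgmeas : ∀ t, Measurable[ℱ (t + 1)] (gs t))
    -- the conditional expectation of `ǧ^(t)` is a subgradient of `f_t`
    -- at `θ^(t)`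
    (hsub : ∀ t < T, ∀ᵐ ω ∂P, ∀ y ∈ Θ,
      f t (θs t ω) + ∑ i, (P[fun ω' => gs t ω' i|ℱ t]) ω * (y i - θs t ω i)
        ≤ f t y)
    -- almost-sure dual-norm bound
    (hgb : ∀ t < T, ∀ᵐ ω ∂P, dualNorm N (gs t ω) ≤ Bg)
    -- the mirror step: `∇Ψ(θ̃^(t+1)) = ∇Ψ(θ^(t)) − η ǧ^(t)`
    (hmirror : ∀ t < T, ∀ ω, gradΨ (θtil (t + 1) ω) = gradΨ (θs t ω) - η • gs t ω)
    -- the Bregman projection step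
    (hproj : ∀ t < T, ∀ ω, θs (t + 1) ω ∈ Θ ∧
      ∀ y ∈ Θ, bregman Ψ gradΨ (θs (t + 1) ω) (θtil (t + 1) ω)
        ≤ bregman Ψ gradΨ y (θtil (t + 1) ω)) :
    ∀ θ' ∈ Θ,
      ENNReal.ofReal (1 - δ) ≤ P {ω |
        (1 / (T : ℝ)) * ∑ t ∈ Finset.range T, f t (θs t ω)
          - (1 / (T : ℝ)) * ∑ t ∈ Finset.range T, f t θ'
        ≤ 2 * Bg * Real.sqrt (2 * BΨ * (1 + 16 * Real.log (1 / δ)) / T)} := by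
  intro θ' hθ'
  obtain hδ₁ | hδ₁ := le_or_gt 1 δ
  · simp [ENNReal.ofReal_eq_zero.2 (sub_nonpos.2 hδ₁)]
  let p : Seminorm ℝ (Fin n → ℝ) := Seminorm.of N hNtri hNsmul
  have hmem : ∀ t ≤ T, ∀ ω, θs t ω ∈ Θ
    | 0, _, ω => (hinit ω).1
    | t + 1, ht, ω => (hproj t ht ω).1
  obtain ⟨ω₀, hω₀⟩ := (hgb 0 hT).exists
  have hBg : 0 ≤ Bg := (dualNorm_nonneg p hNdef _).trans hω₀
  have hBΨ₀ : 0 ≤ BΨ := (hΨnonneg _).trans (hBΨ _ (hinit ω₀).1)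
  obtain ⟨R, hR⟩ := hΘcomp.isBounded.exists_norm_le
  set Y : ℕ → Ω → ℝ := fun t ω => gs t ω ⬝ᵥ (θs t ω - θ')
  have hY (t : ℕ) : StronglyMeasurable[ℱ (t + 1)] (Y t) :=
    ((continuous_fst.dotProduct continuous_snd).measurable.comp ((hgmeas t).prodMk
      (((hθmeas t).mono (ℱ.mono t.le_succ) le_rfl).sub_const θ'))).stronglyMeasurable
  have hYbdd (t : ℕ) (ht : t < T) : ∀ᵐ ω ∂P, |Y t ω| ≤ Bg * (2 * √(2 * BΨ)) :=
    (hgb t ht).mono fun ω hω => abs_dotProduct_sub_le (p := p) hNdef hΨdiff hstrong hΘconv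
      hΨnonneg hBΨ (hinit ω).1 (hinit ω).2 hω (hmem t ht.le ω) hθ'
  have hsubY (t : ℕ) (ht : t < T) : ∀ᵐ ω ∂P, f t (θs t ω) - f t θ' ≤ P[Y t|ℱ t] ω :=
    ae_sub_le_condExp_dotProduct (ℱ.le t) (integrable_apply_of_ae_dualNorm_le (p := p) hNdef
      ((hgmeas t).mono (ℱ.le _) le_rfl) (hgb t ht)) (hθmeas t) (fun ω => hR _ (hmem t ht.le ω))
      ((hsub t ht).mono fun ω h => h θ' hθ')
  have hregret : ∀ᵐ ω ∂P, ∑ t ∈ range T, Y t ω ≤ 3 / 2 * Bg * √(BΨ * T) := by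
    filter_upwards [(Filter.eventually_all_finset (range T)).2 fun t ht => hgb t (mem_range.1 ht)]
      with ω hω
    exact sum_dotProduct_sub_le_of_eq_sqrt (p := p) (z := (θtil · ω)) hNdef hΨdiff hstrong
      hΘconv hT hη hΨnonneg hBΨ (hinit ω) (fun t ht => hω t (mem_range.2 ht))
      (fun t ht => hmirror t ht ω) (fun t ht => hproj t ht ω) hθ'
  refine (ofReal_one_sub_le_measure_sum_le (Z := fun t ω => f t (θs t ω) - f t θ') (by positivity)
    hδ hδ₁.le hY hYbdd hsubY hregret).trans (measure_mono fun ω hω => ?_)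
  rw [Set.mem_ofPred_eq, ← mul_sub, ← sum_sub_distrib, one_div,
    inv_mul_le_iff₀ (by exact_mod_cast hT)]
  exact hω.trans (three_halves_mul_add_le hBg hBΨ₀ (log_nonneg (one_le_one_div hδ hδ₁.le)) hT)

/-- **Stochastic mirror descent** (Theorem C.10).  In the setting of mirror
descent, but where each step uses a stochastic subgradient `ǧ^(t)` (an adapted
random vector, bounded by `B_ǧ` in dual norm almost surely, whose conditional
expectation given the past is a subgradient of `f_t` at `θ^(t)`), and with
step size `η = √(B_Ψ / (T B_ǧ²))`: for every `θ* ∈ Θ`, with probability at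
least `1 − δ` over the draws of the stochastic subgradients,
`(1/T) ∑ₜ fₜ(θ^(t)) − (1/T) ∑ₜ fₜ(θ*) ≤ 2 B_ǧ √(2 B_Ψ (1 + 16 ln(1/δ)) / T)`. -/
theorem stochastic_mirror_descent
    {n : ℕ}
    {Ω : Type*} {m0 : MeasurableSpace Ω} (P : Measure Ω) [IsProbabilityMeasure P]
    (ℱ : Filtration ℕ m0)
    (Θ : Set (Fin n → ℝ)) (hΘcomp : IsCompact Θ) (hΘconv : Convex ℝ Θ)
    (f : ℕ → (Fin n → ℝ) → ℝ) (hf : ∀ t, ConvexOn ℝ Θ (f t))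
    -- `N` is a norm on `ℝ^n`
    (N : (Fin n → ℝ) → ℝ)
    (hNtri : ∀ x y, N (x + y) ≤ N x + N y)
    (hNsmul : ∀ (c : ℝ) x, N (c • x) = |c| * N x)
    (hNdef : ∀ x, N x = 0 → x = 0)
    -- `Ψ` is nonnegative and differentiable, with gradient `gradΨ`
    (Ψ : (Fin n → ℝ) → ℝ) (gradΨ : (Fin n → ℝ) → (Fin n → ℝ))
    (hΨnonneg : ∀ x, 0 ≤ Ψ x)
    (hΨdiff : ∀ x, HasFDerivAt Ψ
      (∑ i, gradΨ x i • (ContinuousLinearMap.proj i : (Fin n → ℝ) →L[ℝ] ℝ)) x)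
    -- `Ψ` is `1`-strongly convex w.r.t. `N`
    (hstrong : ∀ x y,
      Ψ x + (∑ i, gradΨ x i * (y i - x i)) + (1 / 2) * (N (y - x)) ^ 2 ≤ Ψ y)
    (BΨ Bg δ : ℝ) (hδ : 0 < δ) (hBΨ : ∀ x ∈ Θ, Ψ x ≤ BΨ)
    (T : ℕ) (hT : 0 < T)
    (η : ℝ) (hη : η = Real.sqrt (BΨ / (T * Bg ^ 2)))
    (θs θtil : ℕ → Ω → Fin n → ℝ) (gs : ℕ → Ω → Fin n → ℝ)
    -- `θ^(1)` minimizes `Ψ` over `Θ`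
    (hinit : ∀ ω, θs 0 ω ∈ Θ ∧ ∀ y ∈ Θ, Ψ (θs 0 ω) ≤ Ψ y)
    -- adaptedness
    (hθmeas : ∀ t, Measurable[ℱ t] (θs t))
    (hgmeas : ∀ t, Measurable[ℱ (t + 1)] (gs t))
    -- the conditional expectation of `ǧ^(t)` is a subgradient of `f_t`
    -- at `θ^(t)`
    (hsub : ∀ t < T, ∀ᵐ ω ∂P, ∀ y ∈ Θ,
      f t (θs t ω) + ∑ i, (P[fun ω' => gs t ω' i|ℱ t]) ω * (y i - θs t ω i)
        ≤ f t y)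
    -- almost-sure dual-norm bound
    (hgb : ∀ t < T, ∀ᵐ ω ∂P, dualNorm N (gs t ω) ≤ Bg)
    -- the mirror step: `∇Ψ(θ̃^(t+1)) = ∇Ψ(θ^(t)) − η ǧ^(t)`
    (hmirror : ∀ t < T, ∀ ω, gradΨ (θtil (t + 1) ω) = gradΨ (θs t ω) - η • gs t ω)
    -- the Bregman projection step
    (hproj : ∀ t < T, ∀ ω, θs (t + 1) ω ∈ Θ ∧
      ∀ y ∈ Θ, bregman Ψ gradΨ (θs (t + 1) ω) (θtil (t + 1) ω)
        ≤ bregman Ψ gradΨ y (θtil (t + 1) ω)) :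
    ∀ θ' ∈ Θ,
      ENNReal.ofReal (1 - δ) ≤ P {ω |
        (1 / (T : ℝ)) * ∑ t ∈ Finset.range T, f t (θs t ω)
          - (1 / (T : ℝ)) * ∑ t ∈ Finset.range T, f t θ'
        ≤ 2 * Bg * Real.sqrt (2 * BΨ * (1 + 16 * Real.log (1 / δ)) / T)} :=
  stochastic_mirror_descent_general P ℱ Θ hΘcomp hΘconv f N hNtri hNsmul hNdef Ψ gradΨ hΨnonneg
    hΨdiff hstrong BΨ Bg δ hδ hBΨ T hT η hη θs θtil gs hinit hθmeas hgmeas hsub hgb hmirror hproj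
end
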